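/- arXiv:2506.06985 — 5 statements merged into one kernel-verified Lean document; each statement's English description precedes it below -/
import Mathlib

section
/- Let d ≥ 1, T ≥ 1, q > 1, C0, C1 > 0, γ ≥ 0, σ > 0. Let G : ℝ^d → ℝ^d be measurable and let x_0, x_0' ∈ ℝ^d be deterministic with ‖x_0‖ ≤ C0 and ‖x_0'‖ ≤ C0. Define x_{t+1} = x_t − γ Π_{C1}(G(x_t)) + ξ_t and x_{t+1}' = x_t' − γ Π_{C1}(G(x_t')) + ξ_t', with ξ_t, ξ_t' independent N(0, σ² I_d). Then the Rényi divergence of order q between the laws of x_T and x_T' satisfies D_q(x_T ‖ x_T') ≤ 2 q (C0 + γ C1 T)² / (T σ²). -/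
open MeasureTheory Real Finset ENNReal

noncomputable section

abbrev E (d : ℕ) := EuclideanSpace ℝ (Fin d)

/-- Norm clipping operator `Π_C(x) = x ⬝ min(C/‖x‖, 1)`. -/
def clip {d : ℕ} (C : ℝ) (x : E d) : E d := (min (C / ‖x‖) 1) • x

/-- Gaussian measure `N(m, v I_d)` on `ℝ^d` (with variance `v`), via its density. -/
def gaussian (d : ℕ) (m : E d) (v : ℝ) : Measure (E d) :=
  volume.withDensity fun x =>
    ENNReal.ofReal ((2 * Real.pi * v) ^ (-(d : ℝ) / 2) * Real.exp (-‖x - m‖ ^ 2 / (2 * v)))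

/-- Rényi divergence of order `q`. -/
def renyiDiv {d : ℕ} (q : ℝ) (μ ν : Measure (E d)) : ℝ :=
  (q - 1)⁻¹ * Real.log (∫ x, ((μ.rnDeriv ν x).toReal) ^ q ∂ν)

/-- Hockey-stick divergence `E_ε(μ‖ν) = sup_A (μ(A) − e^ε ν(A))`. -/
def hockeyStick {d : ℕ} (ε : ℝ) (μ ν : Measure (E d)) : ℝ :=
  ⨆ A : {s : Set (E d) // MeasurableSet s},
    ((μ A.1).toReal - Real.exp ε * (ν A.1).toReal)

/-- `∞`-Wasserstein distance. -/
def wInfty {d : ℕ} (μ ν : Measure (E d)) : ℝ≥0∞ :=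
  ⨅ (ω : Measure (E d × E d)) (_ : ω.map Prod.fst = μ) (_ : ω.map Prod.snd = ν),
    essSup (fun p => edist p.1 p.2) ω

/-- Shifted Rényi divergence `D_q^{(z)}(μ‖ν)`. -/
def shiftedRenyi {d : ℕ} (q z : ℝ) (μ ν : Measure (E d)) : ℝ :=
  sInf ((fun μ' => renyiDiv q μ' ν) ''
    {μ' : Measure (E d) | IsProbabilityMeasure μ' ∧ wInfty μ' μ ≤ ENNReal.ofReal z})

/-- Law of the iterates `x_{t+1} = ψ_t(x_t) + ξ_t`, `ξ_t ~ N(0, v_t I_d)`, with `x_0 ~ μ0`. -/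
def lawSeq {d : ℕ} (ψ : ℕ → E d → E d) (v : ℕ → ℝ) (μ0 : Measure (E d)) : ℕ → Measure (E d)
  | 0 => μ0
  | t + 1 => (lawSeq ψ v μ0 t).bind fun x => gaussian d (ψ t x) (v t)

/-- Standard Gaussian tail function `Q`. -/
def gaussQ (t : ℝ) : ℝ := (Real.sqrt (2 * Real.pi))⁻¹ * ∫ u in Set.Ioi t, Real.exp (-u ^ 2 / 2)

/-- Amplification factor `θ_ε(r) = Q(ε/r − r/2) − e^ε Q(ε/r + r/2)`. -/
def theta (ε r : ℝ) : ℝ := gaussQ (ε / r - r / 2) - Real.exp ε * gaussQ (ε / r + r / 2)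


open scoped RealInnerProductSpace

namespace AT

variable {d : ℕ} {v : ℝ}

def gpdf (d : ℕ) (v : ℝ) (x : E d) : ℝ≥0∞ :=
  ENNReal.ofReal ((2 * Real.pi * v) ^ (-(d : ℝ) / 2) * Real.exp (-‖x‖ ^ 2 / (2 * v)))

lemma gaussian_eq (m : E d) : gaussian d m v = volume.withDensity (fun x => gpdf d v (x - m)) := rfl

lemma measurable_gpdf_comp {α : Type*} [MeasurableSpace α] {f : α → E d} (hf : Measurable f) :
    Measurable fun a => gpdf d v (f a) := by
  apply Measurable.ennreal_ofReal
  exact (measurable_const.mul (((hf.norm.pow measurable_const).neg.div_const _).exp))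

lemma measurable_gpdf : Measurable (gpdf d v) := measurable_gpdf_comp measurable_id

lemma integral_gauss_pdf (hv : 0 < v) :
    ∫ x : E d, (2 * Real.pi * v) ^ (-(d : ℝ) / 2) * Real.exp (-‖x‖ ^ 2 / (2 * v)) = 1 := by
  have hb : 0 < (2*v)⁻¹ := by positivity
  have h2v : (0:ℝ) < 2 * Real.pi * v := by positivity
  have hexp : ∀ x : E d, Real.exp (-‖x‖ ^ 2 / (2 * v)) = Real.exp (-(2*v)⁻¹ * ‖x‖^2) := by
    intro x; ring_nf
  simp_rw [hexp, integral_const_mul, GaussianFourier.integral_rexp_neg_mul_sq_norm hb]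
  rw [finrank_euclideanSpace_fin]
  have : Real.pi / (2*v)⁻¹ = 2 * Real.pi * v := by field_simp
  rw [this, ← Real.rpow_add h2v]
  rw [show -(d:ℝ)/2 + (d:ℝ)/2 = 0 by ring, Real.rpow_zero]

lemma integrable_gauss_pdf (hv : 0 < v) :
    Integrable (fun x : E d => (2 * Real.pi * v) ^ (-(d : ℝ) / 2) * Real.exp (-‖x‖ ^ 2 / (2 * v))) := by
  have hb : 0 < (2*v)⁻¹ := by positivity
  have h := (GaussianFourier.integrable_cexp_neg_mul_sq_norm_add (V := E d)
    (b := ((2*v)⁻¹ : ℝ)) (by simpa using hb) 0 0).norm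
  apply Integrable.const_mul
  have : (fun x : E d => Real.exp (-‖x‖ ^ 2 / (2 * v)))
      = fun x : E d => ‖Complex.exp (-(((2*v)⁻¹ : ℝ):ℂ) * ‖x‖^2 + 0 * (inner ℝ (0:E d) x : ℝ))‖ := by
    funext x
    rw [Complex.norm_exp]
    push_cast
    simp only [zero_mul, add_zero]
    norm_num
    rw [show ((‖x‖:ℂ) ^ 2).re = ‖x‖^2 by
      rw [show ((‖x‖:ℂ) ^ 2) = ((‖x‖^2 : ℝ) : ℂ) by push_cast; ring, Complex.ofReal_re]]
    field_simp
  rw [this]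
  exact h

lemma lintegral_gpdf (hv : 0 < v) : ∫⁻ x : E d, gpdf d v x = 1 := by
  rw [show (1 : ℝ≥0∞) = ENNReal.ofReal
      (∫ x : E d, (2 * Real.pi * v) ^ (-(d : ℝ) / 2) * Real.exp (-‖x‖ ^ 2 / (2 * v))) by
    rw [integral_gauss_pdf hv]; simp]
  rw [ofReal_integral_eq_lintegral_ofReal (integrable_gauss_pdf hv)]
  · rfl
  · filter_upwards with x
    positivity

-- Part 2
/-- density ratio of `N(u, v)` against `N(0, v)` -/
def dratio (d : ℕ) (v : ℝ) (u ξ : E d) : ℝ≥0∞ :=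
  ENNReal.ofReal (Real.exp ((2 * ⟪ξ, u⟫ - ‖u‖ ^ 2) / (2 * v)))

lemma measurable_dratio_comp {α : Type*} [MeasurableSpace α] {f g : α → E d}
    (hf : Measurable f) (hg : Measurable g) :
    Measurable fun a => dratio d v (f a) (g a) := by
  apply Measurable.ennreal_ofReal
  apply Measurable.exp
  apply Measurable.div_const
  exact (measurable_const.mul (hg.inner hf)).sub ((hf.norm.pow measurable_const))

lemma measurable_dratio (u : E d) : Measurable (dratio d v u) :=
  measurable_dratio_comp measurable_const measurable_id

lemma gpdf_mul_dratio (hv : 0 < v) (u ξ : E d) :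
    gpdf d v ξ * dratio d v u ξ = gpdf d v (ξ - u) := by
  unfold gpdf dratio
  have h1 : (0:ℝ) < 2 * Real.pi * v := by positivity
  rw [← ENNReal.ofReal_mul (by positivity)]
  congr 1
  rw [mul_assoc, ← Real.exp_add]
  congr 2
  rw [norm_sub_sq_real]
  field_simp
  ring

lemma gaussian_map (hv : 0 < v) (m : E d) :
    (gaussian d 0 v).map (fun ξ => m + ξ) = gaussian d m v := by
  have hme : Measurable fun ξ : E d => m + ξ := measurable_const_add m
  ext A hA
  rw [Measure.map_apply hme hA, gaussian_eq, gaussian_eq,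
    withDensity_apply _ (hme hA), withDensity_apply _ hA]
  have hmp : MeasurePreserving (fun ξ : E d => m + ξ) volume volume :=
    measurePreserving_add_left volume m
  have hemb : MeasurableEmbedding (fun ξ : E d => m + ξ) :=
    (MeasurableEquiv.addLeft m).measurableEmbedding
  have h3 := hmp.setLIntegral_comp_emb hemb (fun y => gpdf d v (y - m))
    ((fun ξ : E d => m + ξ) ⁻¹' A)
  have him : (fun ξ : E d => m + ξ) '' ((fun ξ : E d => m + ξ) ⁻¹' A) = A :=
    Set.image_preimage_eq A (MeasurableEquiv.addLeft m).surjective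
  rw [him] at h3
  simp only [add_sub_cancel_left] at h3
  rw [← h3]
  simp

lemma withDensity_gpdf_zero :
    (gaussian d (0:E d) v) = volume.withDensity (gpdf d v) := by
  rw [gaussian_eq]; congr 1; funext x; rw [sub_zero]

lemma map_add_gaussian (hv : 0 < v) (u : E d) :
    (gaussian d 0 v).map (fun ξ => ξ + u) = (gaussian d 0 v).withDensity (dratio d v u) := by
  have h1 : (fun ξ : E d => ξ + u) = (fun ξ : E d => u + ξ) := by funext ξ; rw [add_comm]
  rw [h1, gaussian_map hv, withDensity_gpdf_zero,
    ← withDensity_mul _ measurable_gpdf (measurable_dratio u), gaussian_eq]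
  congr 1
  funext ξ
  exact (gpdf_mul_dratio hv u ξ).symm

lemma gaussian_univ (hv : 0 < v) (m : E d) : gaussian d m v Set.univ = 1 := by
  rw [← gaussian_map hv m, Measure.map_apply (measurable_const_add m) MeasurableSet.univ]
  simp only [Set.preimage_univ]
  rw [withDensity_gpdf_zero, withDensity_apply _ MeasurableSet.univ]
  simpa using lintegral_gpdf hv

lemma isProb_gaussian (hv : 0 < v) (m : E d) : IsProbabilityMeasure (gaussian d m v) :=
  ⟨gaussian_univ hv m⟩

lemma lintegral_gpdf_sub (hv : 0 < v) (m : E d) : ∫⁻ x, gpdf d v (x - m) = 1 := by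
  have := gaussian_univ hv m
  rwa [gaussian_eq, withDensity_apply _ MeasurableSet.univ, Measure.restrict_univ] at this

/-- The key Gaussian Rényi moment computation. -/
lemma lintegral_dratio_rpow (hv : 0 < v) {q : ℝ} (hq : 0 < q) (u : E d) :
    ∫⁻ ξ, (dratio d v u ξ) ^ q ∂(gaussian d 0 v)
      = ENNReal.ofReal (Real.exp (q * (q - 1) * ‖u‖ ^ 2 / (2 * v))) := by
  rw [withDensity_gpdf_zero, lintegral_withDensity_eq_lintegral_mul _ measurable_gpdf
    ((measurable_dratio u).pow_const q)]
  have key : ∀ ξ : E d, (gpdf d v * fun ξ => dratio d v u ξ ^ q) ξ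
      = ENNReal.ofReal (Real.exp (q * (q - 1) * ‖u‖ ^ 2 / (2 * v))) * gpdf d v (ξ - q • u) := by
    intro ξ
    simp only [Pi.mul_apply]
    unfold gpdf dratio
    have h1 : (0:ℝ) < 2 * Real.pi * v := by positivity
    rw [ENNReal.ofReal_rpow_of_pos (Real.exp_pos _),
      Real.rpow_def_of_pos (Real.exp_pos _), Real.log_exp,
      ← ENNReal.ofReal_mul (by positivity), ← ENNReal.ofReal_mul (by positivity)]
    congr 1
    have hns : ‖ξ - q • u‖^2 = ‖ξ‖^2 - 2*(q*⟪ξ,u⟫) + q^2*‖u‖^2 := by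
      rw [norm_sub_sq_real, real_inner_smul_right, norm_smul]
      simp [mul_pow, sq_abs]
    have hexps : (-‖ξ‖ ^ 2 / (2 * v) + (2 * ⟪ξ,u⟫ - ‖u‖ ^ 2) / (2 * v) * q)
         = q * (q - 1) * ‖u‖ ^ 2 / (2 * v) + (-‖ξ - q • u‖ ^ 2 / (2 * v)) := by
      rw [hns]; field_simp; ring
    rw [mul_assoc, ← Real.exp_add, hexps, Real.exp_add]
    ring
  rw [lintegral_congr key, lintegral_const_mul _ (measurable_gpdf_comp (measurable_id'.sub_const _)),
    lintegral_gpdf_sub hv]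
  simp

variable {d : ℕ}

lemma measurable_clip (C : ℝ) : Measurable (clip (d := d) C) :=
  ((measurable_const.div measurable_norm).min measurable_const).smul measurable_id

lemma norm_clip_le {C : ℝ} (hC : 0 ≤ C) (x : E d) : ‖clip C x‖ ≤ C := by
  rw [clip, norm_smul]
  have hnn : 0 ≤ min (C / ‖x‖) 1 := le_min (div_nonneg hC (norm_nonneg x)) one_pos.le
  rw [Real.norm_eq_abs, abs_of_nonneg hnn]
  rcases min_cases (C / ‖x‖) 1 with ⟨h1, h2⟩ | ⟨h1, h2⟩
  · rw [h1]
    rcases eq_or_ne ‖x‖ 0 with h | h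
    · simp [h, hC]
    · rw [div_mul_cancel₀ _ h]
  · rw [h1, one_mul]
    rcases eq_or_ne ‖x‖ 0 with h | h
    · simp [h, hC]
    · have hx : 0 < ‖x‖ := (norm_nonneg x).lt_of_ne (Ne.symm h)
      nlinarith [(one_lt_div hx).1 h2]

lemma norm_sub_clip_le {C : ℝ} (hC : 0 ≤ C) (x : E d) :
    ‖x - clip C x‖ ≤ max (‖x‖ - C) 0 := by
  rw [clip]
  have key : x - (min (C / ‖x‖) 1) • x = (1 - min (C / ‖x‖) 1) • x := by
    rw [sub_smul, one_smul]
  rw [key, norm_smul, Real.norm_eq_abs, abs_of_nonneg (by simp [min_le_right])]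
  rcases min_cases (C / ‖x‖) 1 with ⟨h1, h2⟩ | ⟨h1, h2⟩
  · rw [h1]
    rcases eq_or_ne ‖x‖ 0 with h | h
    · simp [h]
    · have hx : 0 < ‖x‖ := (norm_nonneg x).lt_of_ne (Ne.symm h)
      have : (1 - C / ‖x‖) * ‖x‖ = ‖x‖ - C := by field_simp
      rw [this]; exact le_max_left _ _
  · rw [h1]; simp

/-- iterated noise space -/
def Om (d : ℕ) : ℕ → Type
  | 0 => PUnit
  | t+1 => Om d t × E d

def omMS (d : ℕ) : ∀ t, MeasurableSpace (Om d t)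
  | 0 => inferInstanceAs (MeasurableSpace PUnit)
  | t+1 => @Prod.instMeasurableSpace _ _ (omMS d t) inferInstance

instance (t : ℕ) : MeasurableSpace (Om d t) := omMS d t

/-- iterated product of noise measures -/
def Pm (d : ℕ) (N : Measure (E d)) : ∀ t, Measure (Om d t)
  | 0 => Measure.dirac PUnit.unit
  | t+1 => (Pm d N t).prod N

instance isProbPm (N : Measure (E d)) [IsProbabilityMeasure N] (t : ℕ) :
    IsProbabilityMeasure (Pm d N t) := by
  induction t with
  | zero => exact Measure.dirac.isProbabilityMeasure
  | succ t ih => exact @MeasureTheory.Measure.prod.instIsProbabilityMeasure _ _ _ _ _ _ ih _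

/-- the iterate chain as a function of the noise -/
def chain (ψ : E d → E d) (x0 : E d) : ∀ t, Om d t → E d
  | 0, _ => x0
  | t+1, p => ψ (chain ψ x0 t p.1) + p.2

lemma measurable_chain {ψ : E d → E d} (hψ : Measurable ψ) (x0 : E d) :
    ∀ t, Measurable (chain ψ x0 t)
  | 0 => measurable_const
  | t+1 => ((hψ.comp (measurable_chain hψ x0 t)).comp measurable_fst).add measurable_snd

/-- steered chain started at `x0'`, coupled to `chain ψ x0` -/
def Ych (ψ : E d → E d) (a : ℝ) (x0 x0' : E d) : ∀ t, Om d t → E d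
  | 0, _ => x0'
  | t+1, p => ψ (Ych ψ a x0 x0' t p.1) +
      (p.2 + clip a (ψ (chain ψ x0 t p.1) - ψ (Ych ψ a x0 x0' t p.1)))

lemma measurable_Ych {ψ : E d → E d} (hψ : Measurable ψ) (a : ℝ) (x0 x0' : E d) :
    ∀ t, Measurable (Ych ψ a x0 x0' t)
  | 0 => measurable_const
  | t+1 => by
    have hY := measurable_Ych hψ a x0 x0' t
    have hX := measurable_chain hψ x0 t
    exact ((hψ.comp hY).comp measurable_fst).add (measurable_snd.add
      (((measurable_clip a).comp (((hψ.comp hX).sub (hψ.comp hY)).comp measurable_fst))))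

/-- the chain started at `x0`, read through the inverse of the adapted shift -/
def Zch (ψ : E d → E d) (a : ℝ) (x0 x0' : E d) : ∀ t, Om d t → E d
  | 0, _ => x0
  | t+1, p => ψ (Zch ψ a x0 x0' t p.1) +
      (p.2 - clip a (ψ (Zch ψ a x0 x0' t p.1) - ψ (chain ψ x0' t p.1)))

lemma measurable_Zch {ψ : E d → E d} (hψ : Measurable ψ) (a : ℝ) (x0 x0' : E d) :
    ∀ t, Measurable (Zch ψ a x0 x0' t)
  | 0 => measurable_const
  | t+1 => by
    have hZ := measurable_Zch hψ a x0 x0' t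
    have hX' := measurable_chain hψ x0' t
    exact ((hψ.comp hZ).comp measurable_fst).add (measurable_snd.sub
      (((measurable_clip a).comp (((hψ.comp hZ).sub (hψ.comp hX')).comp measurable_fst))))

/-- adapted shift on noise space -/
def Sh (ψ : E d → E d) (a : ℝ) (x0 x0' : E d) : ∀ t, Om d t → Om d t
  | 0 => id
  | t+1 => fun p => (Sh ψ a x0 x0' t p.1,
      p.2 + clip a (ψ (chain ψ x0 t p.1) - ψ (Ych ψ a x0 x0' t p.1)))

lemma measurable_Sh {ψ : E d → E d} (hψ : Measurable ψ) (a : ℝ) (x0 x0' : E d) :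
    ∀ t, Measurable (Sh ψ a x0 x0' t)
  | 0 => measurable_id
  | t+1 => by
    have hS := measurable_Sh hψ a x0 x0' t
    have hY := measurable_Ych hψ a x0 x0' t
    have hX := measurable_chain hψ x0 t
    exact (hS.comp measurable_fst).prodMk (measurable_snd.add
      ((measurable_clip a).comp (((hψ.comp hX).sub (hψ.comp hY)).comp measurable_fst)))

/-- key algebraic identities: the shift intertwines the chains -/
lemma chain_Sh {ψ : E d → E d} {a : ℝ} {x0 x0' : E d} :
    ∀ t, ∀ p : Om d t, chain ψ x0' t (Sh ψ a x0 x0' t p) = Ych ψ a x0 x0' t p ∧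
      Zch ψ a x0 x0' t (Sh ψ a x0 x0' t p) = chain ψ x0 t p
  | 0, p => ⟨rfl, rfl⟩
  | t+1, p => by
    obtain ⟨h1, h2⟩ := chain_Sh (ψ := ψ) (a := a) (x0 := x0) (x0' := x0') t p.1
    constructor
    · show ψ (chain ψ x0' t (Sh ψ a x0 x0' t p.1)) +
        (p.2 + clip a (ψ (chain ψ x0 t p.1) - ψ (Ych ψ a x0 x0' t p.1))) = _
      rw [h1]
      rfl
    · show ψ (Zch ψ a x0 x0' t (Sh ψ a x0 x0' t p.1)) +
        (_ + clip a (ψ (chain ψ x0 t p.1) - ψ (Ych ψ a x0 x0' t p.1))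
          - clip a (ψ (Zch ψ a x0 x0' t (Sh ψ a x0 x0' t p.1))
            - ψ (chain ψ x0' t (Sh ψ a x0 x0' t p.1)))) = _
      rw [h1, h2]
      show _ = ψ (chain ψ x0 t p.1) + p.2
      abel

/-- coupling contraction: with per-step budget `a = 2C0/T + c`, the chains meet at time `T` -/
lemma chain_close {ψ : E d → E d} {c C0 : ℝ} (hc : 0 ≤ c) (hC0 : 0 < C0)
    (hψ : ∀ x y, ‖ψ x - ψ y‖ ≤ ‖x - y‖ + c) {T : ℕ} (hT : 1 ≤ T)
    {x0 x0' : E d} (h00 : ‖x0 - x0'‖ ≤ 2 * C0) :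
    ∀ t, t ≤ T → ∀ p : Om d t,
      ‖chain ψ x0 t p - Ych ψ (2*C0/T + c) x0 x0' t p‖ ≤ 2*C0 - t*(2*C0/T)
  | 0, _, p => by simpa [chain, Ych] using h00
  | t+1, ht, p => by
    have hTpos : (0:ℝ) < T := by exact_mod_cast Nat.lt_of_lt_of_le Nat.zero_lt_one hT
    have ha : (0:ℝ) ≤ 2*C0/T + c := by positivity
    have ih := chain_close hc hC0 hψ hT h00 t (le_of_lt (Nat.lt_of_succ_le ht)) p.1
    set a := 2*C0/T + c with ha_def
    set X := chain ψ x0 t p.1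
    set Y := Ych ψ a x0 x0' t p.1
    have hstep : chain ψ x0 (t+1) p - Ych ψ a x0 x0' (t+1) p
        = (ψ X - ψ Y) - clip a (ψ X - ψ Y) := by
      show ψ X + p.2 - (ψ Y + (p.2 + clip a (ψ X - ψ Y))) = _
      abel
    rw [hstep]
    have h1 : ‖(ψ X - ψ Y) - clip a (ψ X - ψ Y)‖ ≤ max (‖ψ X - ψ Y‖ - a) 0 :=
      norm_sub_clip_le ha _
    have h2 : ‖ψ X - ψ Y‖ ≤ (2*C0 - t*(2*C0/T)) + c := le_trans (hψ X Y) (by linarith)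
    have hnn : (0:ℝ) ≤ 2*C0 - (t+1)*(2*C0/T) := by
      have htT : ((t:ℝ)+1) ≤ T := by exact_mod_cast ht
      have : ((t:ℝ)+1) * (2*C0/T) ≤ T * (2*C0/T) := by
        apply mul_le_mul_of_nonneg_right htT; positivity
      have hTT : (T:ℝ) * (2*C0/T) = 2*C0 := by field_simp
      linarith
    have : max (‖ψ X - ψ Y‖ - a) 0 ≤ 2*C0 - (t+1)*(2*C0/T) := by
      apply max_le _ hnn
      have : (2*C0 - t*(2*C0/T)) + c - a = 2*C0 - (t+1)*(2*C0/T) := by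
        rw [ha_def]; ring
      linarith
    have hcast : ((t+1 : ℕ):ℝ) = (t:ℝ)+1 := by push_cast; ring
    rw [hcast]
    calc ‖(ψ X - ψ Y) - clip a (ψ X - ψ Y)‖ ≤ max (‖ψ X - ψ Y‖ - a) 0 := h1
      _ ≤ _ := this
    
lemma chain_eq_Ych {ψ : E d → E d} {c C0 : ℝ} (hc : 0 ≤ c) (hC0 : 0 < C0)
    (hψ : ∀ x y, ‖ψ x - ψ y‖ ≤ ‖x - y‖ + c) {T : ℕ} (hT : 1 ≤ T)
    {x0 x0' : E d} (h00 : ‖x0 - x0'‖ ≤ 2 * C0) (p : Om d T) :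
    chain ψ x0 T p = Ych ψ (2*C0/T + c) x0 x0' T p := by
  have h := chain_close hc hC0 hψ hT h00 T le_rfl p
  have hTpos : (0:ℝ) < T := by exact_mod_cast Nat.lt_of_lt_of_le Nat.zero_lt_one hT
  have : (T:ℝ) * (2*C0/T) = 2*C0 := by field_simp
  rw [this] at h
  simp only [sub_self] at h
  exact sub_eq_zero.1 (by simpa using norm_le_zero_iff.1 h)

/-- steering vector used in the density of the shifted noise -/
def vv (ψ : E d → E d) (a : ℝ) (x0 x0' : E d) (t : ℕ) (ω : Om d t) : E d :=
  clip a (ψ (Zch ψ a x0 x0' t ω) - ψ (chain ψ x0' t ω))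

lemma measurable_vv {ψ : E d → E d} (hψ : Measurable ψ) (a : ℝ) (x0 x0' : E d) (t : ℕ) :
    Measurable (vv ψ a x0 x0' t) :=
  (measurable_clip a).comp ((hψ.comp (measurable_Zch hψ a x0 x0' t)).sub
    (hψ.comp (measurable_chain hψ x0' t)))

/-- density of the law of the shifted noise -/
def Wd (v : ℝ) (ψ : E d → E d) (a : ℝ) (x0 x0' : E d) : ∀ t, Om d t → ℝ≥0∞
  | 0, _ => 1
  | t+1, p => Wd v ψ a x0 x0' t p.1 * dratio d v (vv ψ a x0 x0' t p.1) p.2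

lemma measurable_Wd {v : ℝ} {ψ : E d → E d} (hψ : Measurable ψ) (a : ℝ) (x0 x0' : E d) :
    ∀ t, Measurable (Wd v ψ a x0 x0' t)
  | 0 => measurable_const
  | t+1 => by
    have h1 := measurable_Wd (v := v) hψ a x0 x0' t
    exact (h1.comp measurable_fst).mul
      (measurable_dratio_comp ((measurable_vv hψ a x0 x0' t).comp measurable_fst) measurable_snd)

lemma measurable_gaussian_kernel {α : Type*} [MeasurableSpace α] {m : α → E d}
    (hm : Measurable m) (v : ℝ) : Measurable fun x => gaussian d (m x) v := by
  classical
  apply Measure.measurable_of_measurable_coe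
  intro s hs
  have key : ∀ x, gaussian d (m x) v s
      = ∫⁻ y, (if y ∈ s then gpdf d v (y - m x) else 0) ∂volume := by
    intro x
    rw [gaussian_eq, withDensity_apply _ hs, ← lintegral_indicator hs]
    congr 1
  simp_rw [key]
  apply Measurable.lintegral_prod_right'
    (f := fun q : α × E d => if q.2 ∈ s then gpdf d v (q.2 - m q.1) else 0)
  exact Measurable.ite (measurable_snd hs)
    (measurable_gpdf_comp (measurable_snd.sub (hm.comp measurable_fst))) measurable_const

lemma bind_gaussian_eq_map {v : ℝ} (hv : 0 < v) {α : Type*} [MeasurableSpace α]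
    (μ : Measure α) {m : α → E d} (hm : Measurable m) :
    μ.bind (fun x => gaussian d (m x) v)
      = (μ.prod (gaussian d 0 v)).map (fun p => m p.1 + p.2) := by
  haveI := isProb_gaussian hv (0 : E d)
  have hadd : Measurable fun p : α × E d => m p.1 + p.2 :=
    (hm.comp measurable_fst).add measurable_snd
  ext A hA
  rw [Measure.bind_apply hA (measurable_gaussian_kernel hm v).aemeasurable,
    Measure.map_apply hadd hA, Measure.prod_apply (hadd hA)]
  congr 1
  funext x
  rw [← gaussian_map hv (m x), Measure.map_apply (measurable_const_add (m x)) hA]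
  rfl

lemma bind_map {α β γ : Type*} [MeasurableSpace α] [MeasurableSpace β] [MeasurableSpace γ]
    (μ : Measure α) {f : α → β} (hf : Measurable f) {g : β → Measure γ} (hg : Measurable g) :
    (μ.map f).bind g = μ.bind (g ∘ f) := by
  ext A hA
  have hco : Measurable fun b => g b A := (Measure.measurable_coe hA).comp hg
  rw [Measure.bind_apply hA hg.aemeasurable, lintegral_map hco hf, Measure.bind_apply hA (hg.comp hf).aemeasurable]
  rfl

lemma lawSeq_eq_map {v : ℝ} (hv : 0 < v) {ψ : E d → E d} (hψ : Measurable ψ) (x0 : E d) :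
    ∀ t, lawSeq (fun _ => ψ) (fun _ => v) (Measure.dirac x0) t
      = (Pm d (gaussian d 0 v) t).map (chain ψ x0 t)
  | 0 => by
    rw [show lawSeq (fun _ => ψ) (fun _ => v) (Measure.dirac x0) 0 = Measure.dirac x0 from rfl,
      show Pm d (gaussian d 0 v) 0 = @Measure.dirac (Om d 0) _ PUnit.unit from rfl]
    exact (Measure.map_dirac' (measurable_chain hψ x0 0) _).symm
  | t+1 => by
    rw [show lawSeq (fun _ => ψ) (fun _ => v) (Measure.dirac x0) (t+1)
        = (lawSeq (fun _ => ψ) (fun _ => v) (Measure.dirac x0) t).bind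
          (fun x => gaussian d (ψ x) v) from rfl,
      lawSeq_eq_map hv hψ x0 t,
      bind_map _ (measurable_chain hψ x0 t) (measurable_gaussian_kernel hψ v)]
    exact bind_gaussian_eq_map hv _ (hψ.comp (measurable_chain hψ x0 t))

/-- generic one-step density identity for an adaptively shifted product measure -/
lemma shift_step {v : ℝ} (hv : 0 < v) {α : Type*} [MeasurableSpace α] (P : Measure α)
    [SFinite P] {S : α → α} (hS : Measurable S) {w : α → ℝ≥0∞} (hw : Measurable w)
    {V U : α → E d} (hV : Measurable V) (hU : Measurable U)
    (hSV : ∀ ω, V (S ω) = U ω) (hmap : P.map S = P.withDensity w) :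
    (P.prod (gaussian d 0 v)).map (fun p => (S p.1, p.2 + U p.1))
      = (P.prod (gaussian d 0 v)).withDensity (fun p => w p.1 * dratio d v (V p.1) p.2) := by
  classical
  haveI := isProb_gaussian hv (0 : E d)
  set N := gaussian d 0 v with hN
  have hmapm : Measurable fun p : α × E d => (S p.1, p.2 + U p.1) :=
    (hS.comp measurable_fst).prodMk (measurable_snd.add (hU.comp measurable_fst))
  ext A hA
  set g : α → ℝ≥0∞ :=
    fun ω' => ∫⁻ ξ, (if (ω', ξ) ∈ A then dratio d v (V ω') ξ else 0) ∂N with hg_def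
  have hgmeas : Measurable g := by
    apply Measurable.lintegral_prod_right'
      (f := fun p : α × E d => if p ∈ A then dratio d v (V p.1) p.2 else 0)
    exact Measurable.ite hA
      (measurable_dratio_comp (hV.comp measurable_fst) measurable_snd) measurable_const
  have hg_eq : ∀ ω', g ω' = ∫⁻ ξ in Prod.mk ω' ⁻¹' A, dratio d v (V ω') ξ ∂N := by
    intro ω'
    rw [hg_def, ← lintegral_indicator (measurable_prodMk_left hA)]
    congr 1
  have hLHS : ((P.prod N).map (fun p => (S p.1, p.2 + U p.1))) A
      = ∫⁻ ω, (w ω) * g ω ∂P := by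
    rw [Measure.map_apply hmapm hA, Measure.prod_apply (hmapm hA)]
    have hptwise : ∀ ω : α,
        N (Prod.mk ω ⁻¹' ((fun p : α × E d => (S p.1, p.2 + U p.1)) ⁻¹' A)) = g (S ω) := by
      intro ω
      have hset : Prod.mk ω ⁻¹' ((fun p : α × E d => (S p.1, p.2 + U p.1)) ⁻¹' A)
          = (fun ξ => ξ + U ω) ⁻¹' (Prod.mk (S ω) ⁻¹' A) := rfl
      rw [hset, ← Measure.map_apply (measurable_add_const (U ω)) (measurable_prodMk_left hA),
        map_add_gaussian hv (U ω), withDensity_apply _ (measurable_prodMk_left hA),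
        hg_eq (S ω), hSV ω]
    rw [lintegral_congr hptwise, ← lintegral_map hgmeas hS, hmap,
      lintegral_withDensity_eq_lintegral_mul _ hw hgmeas]
    rfl
  have hRHS : ((P.prod N).withDensity (fun p => w p.1 * dratio d v (V p.1) p.2)) A
      = ∫⁻ ω, (w ω) * g ω ∂P := by
    have hWm : Measurable (fun p : α × E d => w p.1 * dratio d v (V p.1) p.2) :=
      (hw.comp measurable_fst).mul
        (measurable_dratio_comp (hV.comp measurable_fst) measurable_snd)
    rw [withDensity_apply _ hA, ← lintegral_indicator hA,
      lintegral_prod _ (hWm.indicator hA).aemeasurable]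
    congr 1
    funext ω
    have hptw : ∀ ξ : E d, A.indicator (fun p : α × E d => w p.1 * dratio d v (V p.1) p.2) (ω, ξ)
        = w ω * (if (ω, ξ) ∈ A then dratio d v (V ω) ξ else 0) := by
      intro ξ
      simp only [Set.indicator_apply]
      by_cases h : (ω, ξ) ∈ A <;> simp [h]
    rw [lintegral_congr hptw, lintegral_const_mul _ (by
      exact Measurable.ite (measurable_prodMk_left hA)
        (measurable_dratio_comp measurable_const measurable_id) measurable_const)]
  rw [hLHS, hRHS]

/-- the law of the adaptively shifted noise has density `Wd` -/
lemma map_Sh_eq {v : ℝ} (hv : 0 < v) {ψ : E d → E d} (hψ : Measurable ψ)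
    (a : ℝ) (x0 x0' : E d) :
    ∀ t, (Pm d (gaussian d 0 v) t).map (Sh ψ a x0 x0' t)
      = (Pm d (gaussian d 0 v) t).withDensity (Wd v ψ a x0 x0' t)
  | 0 => by
    rw [show Sh ψ a x0 x0' 0 = id from rfl, Measure.map_id,
      show Wd v ψ a x0 x0' 0 = (fun _ => 1) from rfl]
    exact withDensity_one.symm
  | t+1 => by
    haveI := isProb_gaussian hv (0 : E d)
    exact shift_step hv (Pm d (gaussian d 0 v) t) (measurable_Sh hψ a x0 x0' t)
      (measurable_Wd (v := v) hψ a x0 x0' t) (measurable_vv hψ a x0 x0' t)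
      ((measurable_clip a).comp
        ((hψ.comp (measurable_chain hψ x0 t)).sub (hψ.comp (measurable_Ych hψ a x0 x0' t))))
      (fun ω => by rw [vv, (chain_Sh t ω).1, (chain_Sh t ω).2]; rfl)
      (map_Sh_eq hv hψ a x0 x0' t)

/-- generic one-step moment bound -/
lemma moment_step {v : ℝ} (hv : 0 < v) {q : ℝ} (hq1 : 1 ≤ q) {α : Type*} [MeasurableSpace α]
    (P : Measure α) [SFinite P] {w : α → ℝ≥0∞} (hw : Measurable w)
    {V : α → E d} (hV : Measurable V) {a : ℝ} (hVa : ∀ ω, ‖V ω‖ ≤ a) :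
    ∫⁻ p : α × E d, (w p.1 * dratio d v (V p.1) p.2) ^ q ∂(P.prod (gaussian d 0 v))
      ≤ ENNReal.ofReal (Real.exp (q * (q - 1) * a ^ 2 / (2 * v)))
        * ∫⁻ ω, (w ω) ^ q ∂P := by
  haveI := isProb_gaussian hv (0 : E d)
  set N := gaussian d 0 v with hN
  have h0q : (0:ℝ) ≤ q := le_trans zero_le_one hq1
  have hqq : (0:ℝ) ≤ q * (q - 1) := mul_nonneg (by linarith) (by linarith)
  have hWm : Measurable (fun p : α × E d => (w p.1 * dratio d v (V p.1) p.2) ^ q) :=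
    ((hw.comp measurable_fst).mul
      (measurable_dratio_comp (hV.comp measurable_fst) measurable_snd)).pow_const q
  rw [lintegral_prod _ hWm.aemeasurable]
  have inner_bound : ∀ ω : α, ∫⁻ ξ, (w ω * dratio d v (V ω) ξ) ^ q ∂N
      ≤ (w ω) ^ q * ENNReal.ofReal (Real.exp (q * (q - 1) * a ^ 2 / (2 * v))) := by
    intro ω
    have : ∀ ξ : E d, (w ω * dratio d v (V ω) ξ) ^ q = (w ω) ^ q * (dratio d v (V ω) ξ) ^ q :=
      fun ξ => ENNReal.mul_rpow_of_nonneg _ _ h0q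
    rw [lintegral_congr this, lintegral_const_mul _ ((measurable_dratio _).pow_const q),
      lintegral_dratio_rpow hv (by linarith : (0:ℝ) < q) (V ω)]
    apply mul_le_mul_right
    apply ENNReal.ofReal_le_ofReal
    apply Real.exp_le_exp.2
    apply div_le_div_of_nonneg_right _ (by linarith)
    · apply mul_le_mul_of_nonneg_left _ hqq
      have h1 : 0 ≤ ‖V ω‖ := norm_nonneg _
      nlinarith [hVa ω]
  calc ∫⁻ ω, ∫⁻ ξ, (w ω * dratio d v (V ω) ξ) ^ q ∂N ∂P
      ≤ ∫⁻ ω, (w ω) ^ q * ENNReal.ofReal (Real.exp (q * (q - 1) * a ^ 2 / (2 * v))) ∂P :=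
        lintegral_mono inner_bound
    _ = _ := by
        rw [lintegral_mul_const _ (hw.pow_const q), mul_comm]

lemma lintegral_Wd_rpow {v : ℝ} (hv : 0 < v) {ψ : E d → E d} (hψ : Measurable ψ)
    {q : ℝ} (hq1 : 1 ≤ q) {a : ℝ} (ha : 0 ≤ a) (x0 x0' : E d) :
    ∀ t, ∫⁻ ω, (Wd v ψ a x0 x0' t ω) ^ q ∂(Pm d (gaussian d 0 v) t)
      ≤ (ENNReal.ofReal (Real.exp (q * (q - 1) * a ^ 2 / (2 * v)))) ^ t
  | 0 => by
    haveI := isProb_gaussian hv (0 : E d)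
    haveI := isProbPm (d := d) (gaussian d 0 v) 0
    rw [show Wd v ψ a x0 x0' 0 = (fun _ => 1) from rfl]
    simp [ENNReal.one_rpow]
  | t+1 => by
    haveI := isProb_gaussian hv (0 : E d)
    have step := moment_step hv hq1 (Pm d (gaussian d 0 v) t)
      (measurable_Wd (v := v) hψ a x0 x0' t) (measurable_vv hψ a x0 x0' t)
      (fun ω => norm_clip_le ha _)
    refine le_trans step (le_trans
      (mul_le_mul_right (lintegral_Wd_rpow hv hψ hq1 ha x0 x0' t) _) (le_of_eq (by ring)))

/-- data-processing + Young truncation argument: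
the `q`-th moment of the Radon–Nikodym derivative of pushforwards is controlled by
the `q`-th moment of the density upstairs. -/
lemma dpi_young {α : Type*} [MeasurableSpace α] (P : Measure α) [IsProbabilityMeasure P]
    {F : α → E d} (hF : Measurable F) {W : α → ℝ≥0∞} (hW : Measurable W)
    (hprob : IsProbabilityMeasure (P.withDensity W)) {q : ℝ} (hq : 1 < q) :
    ∫⁻ x, (((P.withDensity W).map F).rnDeriv (P.map F) x) ^ q ∂(P.map F)
      ≤ ∫⁻ ω, (W ω) ^ q ∂P := by
  haveI := hprob
  set μ := (P.withDensity W).map F with hμ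
  set ν := P.map F with hν
  haveI : IsProbabilityMeasure μ := Measure.isProbabilityMeasure_map hF.aemeasurable
  haveI : IsProbabilityMeasure ν := Measure.isProbabilityMeasure_map hF.aemeasurable
  set h := μ.rnDeriv ν with hh
  have hmeas : Measurable h := Measure.measurable_rnDeriv μ ν
  have hac : μ ≪ ν :=
    Measure.AbsolutelyContinuous.map (withDensity_absolutelyContinuous P W) hF
  have hwd : ν.withDensity h = μ := Measure.withDensity_rnDeriv_eq μ ν hac
  have h0q : (0:ℝ) < q := lt_trans zero_lt_one hq
  have key : ∀ φ : E d → ℝ≥0∞, Measurable φ →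
      ∫⁻ ω, φ (F ω) * W ω ∂P = ∫⁻ ω, φ (F ω) * h (F ω) ∂P := by
    intro φ hφ
    have e1 : ∫⁻ ω, φ (F ω) * W ω ∂P = ∫⁻ ω, φ (F ω) ∂(P.withDensity W) := by
      rw [lintegral_withDensity_eq_lintegral_mul _ hW (show Measurable fun ω => φ (F ω) from hφ.comp hF)]
      exact lintegral_congr fun ω => mul_comm _ _
    have e2 : ∫⁻ ω, φ (F ω) ∂(P.withDensity W) = ∫⁻ x, φ x ∂μ := (lintegral_map hφ hF).symm
    have e3 : ∫⁻ x, φ x ∂μ = ∫⁻ x, h x * φ x ∂ν := by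
      rw [← hwd, lintegral_withDensity_eq_lintegral_mul _ hmeas hφ]; rfl
    have e4 : ∫⁻ x, h x * φ x ∂ν = ∫⁻ ω, h (F ω) * φ (F ω) ∂P := lintegral_map (hmeas.mul hφ) hF
    rw [e1, e2, e3, e4]
    exact lintegral_congr fun ω => mul_comm _ _
  set p := q / (q - 1) with hp
  have hpq : p.HolderConjugate q := (Real.HolderConjugate.conjExponent hq).symm
  set K := ∫⁻ ω, (W ω) ^ q ∂P with hK
  have trunc : ∀ n : ℕ, ∫⁻ ω, (min (h (F ω)) n) ^ q ∂P ≤ K := by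
    intro n
    set gn : E d → ℝ≥0∞ := fun x => min (h x) n with hgn
    have hgnm : Measurable gn := hmeas.min measurable_const
    set Ign := ∫⁻ ω, (gn (F ω)) ^ q ∂P with hIgn
    have hIfin : Ign ≠ ⊤ := by
      have h1 : Ign ≤ ∫⁻ _ω, (n:ℝ≥0∞) ^ q ∂P :=
        lintegral_mono fun ω => ENNReal.rpow_le_rpow (min_le_right _ _) h0q.le
      rw [lintegral_const, measure_univ, mul_one] at h1
      exact ne_top_of_le_ne_top
        (ENNReal.rpow_ne_top_of_nonneg h0q.le (ENNReal.natCast_ne_top n)) h1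
    have step1 : ∀ ω, (gn (F ω)) ^ q ≤ gn (F ω) ^ (q-1) * h (F ω) := by
      intro ω
      rcases eq_or_ne (gn (F ω)) 0 with h0 | h0
      · rw [h0, ENNReal.zero_rpow_of_pos h0q]; exact zero_le'
      · have hne : gn (F ω) ≠ ⊤ :=
          ne_top_of_le_ne_top (ENNReal.natCast_ne_top n) (min_le_right _ _)
        have he : gn (F ω) ^ q = gn (F ω) ^ (q-1) * gn (F ω) := by
          have h2 := ENNReal.rpow_add (x := gn (F ω)) (q-1) 1 h0 hne
          rw [show q - 1 + 1 = q by ring, ENNReal.rpow_one] at h2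
          exact h2
        rw [he]
        exact mul_le_mul_right (min_le_left _ _) _
    have young : ∀ ω, gn (F ω) ^ (q-1) * W ω
        ≤ (gn (F ω)) ^ q / ENNReal.ofReal p + (W ω) ^ q / ENNReal.ofReal q := by
      intro ω
      have hy := ENNReal.young_inequality (gn (F ω) ^ (q-1)) (W ω) hpq
      rwa [← ENNReal.rpow_mul, show (q-1) * p = q by
        rw [hp]; have h1 : q - 1 ≠ 0 := by linarith
        field_simp] at hy
    have main : Ign ≤ Ign / ENNReal.ofReal p + K / ENNReal.ofReal q := by
      calc Ign ≤ ∫⁻ ω, gn (F ω) ^ (q-1) * h (F ω) ∂P := lintegral_mono step1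
        _ = ∫⁻ ω, gn (F ω) ^ (q-1) * W ω ∂P := (key _ (hgnm.pow_const _)).symm
        _ ≤ ∫⁻ ω, ((gn (F ω)) ^ q / ENNReal.ofReal p + (W ω) ^ q / ENNReal.ofReal q) ∂P :=
            lintegral_mono young
        _ = Ign / ENNReal.ofReal p + K / ENNReal.ofReal q := by
            rw [lintegral_add_left ((show Measurable fun ω => gn (F ω) ^ q from (hgnm.comp hF).pow_const q).div_const _)]
            congr 1
            · simp_rw [div_eq_mul_inv]
              rw [lintegral_mul_const _ (show Measurable fun ω => gn (F ω) ^ q from (hgnm.comp hF).pow_const q)]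
            · simp_rw [div_eq_mul_inv]
              rw [lintegral_mul_const _ (hW.pow_const q)]
    by_cases hKtop : K = ⊤
    · rw [hKtop]; exact le_top
    · have hpne : (ENNReal.ofReal p) ≠ 0 := (ENNReal.ofReal_pos.2 hpq.pos).ne'
      have hqne : (ENNReal.ofReal q) ≠ 0 := (ENNReal.ofReal_pos.2 h0q).ne'
      have hc1 : Ign / ENNReal.ofReal p ≠ ⊤ := (ENNReal.div_lt_top hIfin hpne).ne
      have hc2 : K / ENNReal.ofReal q ≠ ⊤ := (ENNReal.div_lt_top hKtop hqne).ne
      have hto := ENNReal.toReal_mono (ENNReal.add_ne_top.2 ⟨hc1, hc2⟩) main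
      rw [ENNReal.toReal_add hc1 hc2, ENNReal.toReal_div, ENNReal.toReal_div,
        ENNReal.toReal_ofReal hpq.nonneg, ENNReal.toReal_ofReal h0q.le] at hto
      have hinv : p⁻¹ + q⁻¹ = 1 := hpq.inv_add_inv_eq_one
      have hx_eq : Ign.toReal * p⁻¹ + Ign.toReal * q⁻¹ = Ign.toReal := by
        rw [← mul_add, hinv, mul_one]
      have h5 : Ign.toReal * q⁻¹ ≤ K.toReal * q⁻¹ := by
        have h6 : Ign.toReal ≤ Ign.toReal * p⁻¹ + K.toReal * q⁻¹ := by
          simpa [div_eq_mul_inv] using hto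
        linarith
      have hxk : Ign.toReal ≤ K.toReal := le_of_mul_le_mul_right h5 (inv_pos.2 h0q)
      exact (ENNReal.toReal_le_toReal hIfin hKtop).1 hxk
  have hsup : ∀ y : ℝ≥0∞, (⨆ n : ℕ, (min y n) ^ q) = y ^ q := by
    intro y
    rcases eq_or_ne y ⊤ with hy | hy
    · subst hy
      have hmin : ∀ n : ℕ, min (⊤:ℝ≥0∞) (n:ℝ≥0∞) = n := fun n => min_eq_right le_top
      simp only [hmin]
      rw [ENNReal.top_rpow_of_pos h0q, eq_top_iff]
      have h1 : ∀ n : ℕ, (n:ℝ≥0∞) ≤ (n:ℝ≥0∞) ^ q := by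
        intro n
        rcases Nat.eq_zero_or_pos n with h | h
        · subst h; simp
        · calc (n:ℝ≥0∞) = (n:ℝ≥0∞) ^ (1:ℝ) := (ENNReal.rpow_one _).symm
            _ ≤ (n:ℝ≥0∞) ^ q := ENNReal.rpow_le_rpow_of_exponent_le
                (by exact_mod_cast h) hq.le
      have h3 : (⨆ n : ℕ, (n:ℝ≥0∞)) = ⊤ := by
        rw [eq_top_iff]
        refine le_of_forall_lt fun b hb => ?_
        obtain ⟨n, hn⟩ := ENNReal.exists_nat_gt hb.ne_top
        exact lt_of_lt_of_le hn (le_iSup (fun n : ℕ => (n:ℝ≥0∞)) n)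
      calc (⊤:ℝ≥0∞) = ⨆ n : ℕ, (n:ℝ≥0∞) := h3.symm
        _ ≤ ⨆ n : ℕ, (n:ℝ≥0∞) ^ q := iSup_mono h1
    · obtain ⟨n, hn⟩ := ENNReal.exists_nat_gt hy
      apply le_antisymm
      · exact iSup_le fun m => ENNReal.rpow_le_rpow (min_le_left _ _) h0q.le
      · exact le_iSup_of_le n (le_of_eq (by rw [min_eq_left hn.le]))
  have hmono : Monotone fun (n:ℕ) => fun (ω : α) => (min (h (F ω)) n) ^ q := by
    intro m n hmn
    intro ω
    exact ENNReal.rpow_le_rpow (min_le_min le_rfl (by exact_mod_cast hmn)) h0q.le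
  calc ∫⁻ x, h x ^ q ∂ν = ∫⁻ ω, (h (F ω)) ^ q ∂P := lintegral_map (hmeas.pow_const q) hF
    _ = ∫⁻ ω, ⨆ n : ℕ, (min (h (F ω)) n) ^ q ∂P := lintegral_congr fun ω => (hsup _).symm
    _ = ⨆ n : ℕ, ∫⁻ ω, (min (h (F ω)) n) ^ q ∂P :=
        lintegral_iSup (fun n => (show Measurable fun ω => min (h (F ω)) (n:ℝ≥0∞) from (hmeas.comp hF).min measurable_const).pow_const q) hmono
    _ ≤ K := iSup_le trunc

end AT

/-- Gradient clipping without regularization, constant step size and noise: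
`D_q(x_T ‖ x_T') ≤ 2 q (C0 + γ C1 T)² / (T σ²)`. -/
theorem stmt2 {d : ℕ} (hd : 1 ≤ d) (T : ℕ) (hT : 1 ≤ T) (q : ℝ) (hq : 1 < q)
    (C0 C1 : ℝ) (hC0 : 0 < C0) (hC1 : 0 < C1) (γ : ℝ) (hγ : 0 ≤ γ) (σ : ℝ) (hσ : 0 < σ)
    (G : E d → E d) (hG : Measurable G)
    (x0 x0' : E d) (hx0 : ‖x0‖ ≤ C0) (hx0' : ‖x0'‖ ≤ C0) :
    renyiDiv q
      (lawSeq (fun _ x => x - γ • clip C1 (G x)) (fun _ => σ ^ 2) (Measure.dirac x0) T)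
      (lawSeq (fun _ x => x - γ • clip C1 (G x)) (fun _ => σ ^ 2) (Measure.dirac x0') T)
      ≤ 2 * q * (C0 + γ * C1 * T) ^ 2 / (T * σ ^ 2) := by
  classical
  have hv : (0:ℝ) < σ^2 := by positivity
  have hTpos : (0:ℝ) < (T:ℝ) := by exact_mod_cast Nat.lt_of_lt_of_le Nat.zero_lt_one hT
  set ψ : E d → E d := fun x => x - γ • clip C1 (G x) with hψdef
  have hψm : Measurable ψ := measurable_id.sub (((AT.measurable_clip C1).comp hG).const_smul γ)
  have hψlip : ∀ x y, ‖ψ x - ψ y‖ ≤ ‖x - y‖ + 2*(γ*C1) := by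
    intro x y
    have h1 : ψ x - ψ y = (x - y) - (γ • clip C1 (G x) - γ • clip C1 (G y)) := by
      show (x - γ • clip C1 (G x)) - (y - γ • clip C1 (G y)) = _; abel
    rw [h1]
    have h2 : ∀ z : E d, ‖γ • clip C1 z‖ ≤ γ * C1 := by
      intro z
      rw [norm_smul, Real.norm_eq_abs, abs_of_nonneg hγ]
      exact mul_le_mul_of_nonneg_left (AT.norm_clip_le hC1.le z) hγ
    calc ‖(x - y) - (γ • clip C1 (G x) - γ • clip C1 (G y))‖
        ≤ ‖x - y‖ + ‖γ • clip C1 (G x) - γ • clip C1 (G y)‖ := norm_sub_le _ _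
      _ ≤ ‖x - y‖ + (‖γ • clip C1 (G x)‖ + ‖γ • clip C1 (G y)‖) := by
          have := norm_sub_le (γ • clip C1 (G x)) (γ • clip C1 (G y))
          linarith
      _ ≤ ‖x - y‖ + 2*(γ*C1) := by
          have := h2 (G x); have := h2 (G y); linarith
  set c : ℝ := 2*(γ*C1) with hcdef
  have hc : 0 ≤ c := by positivity
  set a : ℝ := 2*C0/(T:ℝ) + c with hadef
  have ha : 0 ≤ a := by positivity
  have h00 : ‖x0 - x0'‖ ≤ 2*C0 := le_trans (norm_sub_le _ _) (by linarith)
  haveI hNprob : IsProbabilityMeasure (gaussian d 0 (σ^2)) := AT.isProb_gaussian hv (0 : E d)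
  set N := gaussian d 0 (σ^2) with hNdef
  set P := AT.Pm d N T with hPdef
  haveI : IsProbabilityMeasure P := AT.isProbPm N T
  set F := AT.chain ψ x0' T with hFdef
  have hFm : Measurable F := AT.measurable_chain hψm x0' T
  set W := AT.Wd (σ^2) ψ a x0 x0' T with hWdef
  have hWm : Measurable W := AT.measurable_Wd hψm a x0 x0' T
  have hshift : P.map (AT.Sh ψ a x0 x0' T) = P.withDensity W := AT.map_Sh_eq hv hψm a x0 x0' T
  have e2 : lawSeq (fun _ => ψ) (fun _ => σ ^ 2) (Measure.dirac x0') T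
      = P.map F := AT.lawSeq_eq_map hv hψm x0' T
  have e1 : lawSeq (fun _ => ψ) (fun _ => σ ^ 2) (Measure.dirac x0) T
      = (P.withDensity W).map F := by
    have h3 : AT.chain ψ x0 T = F ∘ (AT.Sh ψ a x0 x0' T) := by
      funext p
      rw [Function.comp_apply, hFdef, (AT.chain_Sh T p).1]
      exact AT.chain_eq_Ych hc hC0 hψlip hT h00 p
    calc lawSeq (fun _ => ψ) (fun _ => σ ^ 2) (Measure.dirac x0) T
        = P.map (AT.chain ψ x0 T) := AT.lawSeq_eq_map hv hψm x0 T
      _ = P.map (F ∘ AT.Sh ψ a x0 x0' T) := by rw [h3]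
      _ = (P.map (AT.Sh ψ a x0 x0' T)).map F :=
          (Measure.map_map hFm (AT.measurable_Sh hψm a x0 x0' T)).symm
      _ = (P.withDensity W).map F := by rw [hshift]
  haveI hQprob : IsProbabilityMeasure (P.withDensity W) := by
    rw [← hshift]
    exact Measure.isProbabilityMeasure_map (AT.measurable_Sh hψm a x0 x0' T).aemeasurable
  have hdpi := AT.dpi_young P hFm hWm hQprob hq
  have hmom := AT.lintegral_Wd_rpow hv hψm hq.le ha x0 x0' T
  have hCT : (ENNReal.ofReal (Real.exp (q * (q - 1) * a ^ 2 / (2 * σ^2)))) ^ T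
      = ENNReal.ofReal (Real.exp ((T:ℝ) * (q * (q - 1) * a ^ 2 / (2 * σ^2)))) := by
    rw [← ENNReal.ofReal_pow (Real.exp_pos _).le, ← Real.exp_nat_mul]
  set KR : ℝ := Real.exp ((T:ℝ) * (q * (q - 1) * a ^ 2 / (2 * σ^2))) with hKRdef
  have hbound : ∫⁻ x, (((P.withDensity W).map F).rnDeriv (P.map F) x) ^ q ∂(P.map F)
      ≤ ENNReal.ofReal KR := le_trans hdpi (le_trans hmom (le_of_eq hCT))
  set h := ((P.withDensity W).map F).rnDeriv (P.map F) with hhdef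
  have hhm : Measurable h := Measure.measurable_rnDeriv _ _
  have hLfin : ∫⁻ x, h x ^ q ∂(P.map F) ≠ ⊤ :=
    ne_top_of_le_ne_top ENNReal.ofReal_ne_top hbound
  have hint : ∫ x, (h x).toReal ^ q ∂(P.map F) = (∫⁻ x, h x ^ q ∂(P.map F)).toReal := by
    simp_rw [ENNReal.toReal_rpow]
    exact integral_toReal (hhm.pow_const q).aemeasurable
      (ae_lt_top (hhm.pow_const q) hLfin)
  have hIle : (∫⁻ x, h x ^ q ∂(P.map F)).toReal ≤ KR :=
    ENNReal.toReal_le_of_le_ofReal (Real.exp_pos _).le hbound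
  have hInn : 0 ≤ (∫⁻ x, h x ^ q ∂(P.map F)).toReal := ENNReal.toReal_nonneg
  have hq1 : (0:ℝ) ≤ q - 1 := by linarith
  have hexp_nonneg : 0 ≤ (T:ℝ) * (q * (q - 1) * a ^ 2 / (2 * σ^2)) := by
    apply mul_nonneg (le_of_lt hTpos)
    apply div_nonneg _ (by positivity)
    exact mul_nonneg (mul_nonneg (by linarith) hq1) (sq_nonneg a)
  have hlog : Real.log ((∫⁻ x, h x ^ q ∂(P.map F)).toReal)
      ≤ (T:ℝ) * (q * (q - 1) * a ^ 2 / (2 * σ^2)) := by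
    rcases eq_or_lt_of_le hInn with h0 | hpos
    · rw [← h0, Real.log_zero]; exact hexp_nonneg
    · calc Real.log ((∫⁻ x, h x ^ q ∂(P.map F)).toReal) ≤ Real.log KR :=
          Real.log_le_log hpos hIle
        _ = _ := by rw [hKRdef, Real.log_exp]
  have final : renyiDiv q (lawSeq (fun _ => ψ) (fun _ => σ ^ 2) (Measure.dirac x0) T)
      (lawSeq (fun _ => ψ) (fun _ => σ ^ 2) (Measure.dirac x0') T)
      ≤ 2 * q * (C0 + γ * C1 * T) ^ 2 / (T * σ ^ 2) := by
    rw [e1, e2]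
    show (q - 1)⁻¹ * Real.log (∫ x, (h x).toReal ^ q ∂(P.map F))
      ≤ 2 * q * (C0 + γ * C1 * T) ^ 2 / (T * σ ^ 2)
    rw [hint]
    calc (q - 1)⁻¹ * Real.log ((∫⁻ x, h x ^ q ∂(P.map F)).toReal)
        ≤ (q - 1)⁻¹ * ((T:ℝ) * (q * (q - 1) * a ^ 2 / (2 * σ^2))) :=
          mul_le_mul_of_nonneg_left hlog (inv_nonneg.2 hq1)
      _ = 2 * q * (C0 + γ * C1 * T) ^ 2 / (T * σ ^ 2) := by
          rw [hadef, hcdef]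
          have hq10 : q - 1 ≠ 0 := by linarith
          have hT0 : (T:ℝ) ≠ 0 := ne_of_gt hTpos
          have hσ0 : σ ≠ 0 := ne_of_gt hσ
          field_simp
  exact final
end
end

section
/- Let d ≥ 1, T ≥ 1, q > 1, C0, C1 > 0, γ > 0, λ > 0 with γλ < 1, and σ > 0. Set ρ := 1 − γλ. Let G : ℝ^d → ℝ^d be measurable and let x_0, x_0' ∈ ℝ^d be deterministic with ‖x_0‖ ≤ C0 and ‖x_0'‖ ≤ C0. Define x_{t+1} = x_t − γ (Π_{C1}(G(x_t)) + λ x_t) + ξ_t and x_{t+1}' = x_t' − γ (Π_{C1}(G(x_t')) + λ x_t') + ξ_t', with ξ_t, ξ_t' independent N(0, σ² I_d). Then the Rényi divergence of order q between the laws of x_T and x_T' satisfies D_q(x_T ‖ x_T') ≤ (q / (2σ²)) · ( γλ(2 − γλ) / (1 − ρ^{2T}) ) · [ 2 C0 ρ^T + (2 C1 / λ)(1 − ρ^T) ]². -/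
open MeasureTheory Real Finset ENNReal
open scoped RealInnerProductSpace

set_option maxHeartbeats 1000000

noncomputable section

namespace Stmt3

variable {d : ℕ}

def gdens (d : ℕ) (m : E d) (v : ℝ) (x : E d) : ℝ≥0∞ :=
  ENNReal.ofReal ((2 * Real.pi * v) ^ (-(d : ℝ) / 2) * Real.exp (-‖x - m‖ ^ 2 / (2 * v)))

lemma gaussian_eq (m : E d) (v : ℝ) : gaussian d m v = volume.withDensity (gdens d m v) := rfl

lemma measurable_gdens (m : E d) (v : ℝ) : Measurable (gdens d m v) := by
  unfold gdens; fun_prop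

lemma integrable_rexp_neg_mul_sq_norm {b : ℝ} (hb : 0 < b) :
    Integrable (fun x : E d => rexp (-b * ‖x‖ ^ 2)) := by
  have h := (GaussianFourier.integrable_cexp_neg_mul_sq_norm_add_of_euclideanSpace
      (ι := Fin d) (b := (b : ℂ)) (by simpa using hb) 0 0)
  have h2 := h.re
  refine h2.congr (Filter.Eventually.of_forall fun x => ?_)
  have h3 : (-(b:ℂ) * (‖x‖:ℂ) ^ 2 + 0 * ((inner ℝ (0: E d) x : ℝ) : ℂ)) = ((-b * ‖x‖ ^ 2 : ℝ) : ℂ) := by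
    push_cast; ring
  show (Complex.exp _).re = _
  rw [h3, Complex.exp_ofReal_re]

lemma integral_rexp_neg_mul_sq_norm' {b : ℝ} (hb : 0 < b) :
    ∫ x : E d, rexp (-b * ‖x‖ ^ 2) = (π / b) ^ ((d:ℝ) / 2) := by
  rw [GaussianFourier.integral_rexp_neg_mul_sq_norm hb]
  norm_num [finrank_euclideanSpace_fin]

/-- total mass of the Gaussian density -/
lemma lintegral_gdens {v : ℝ} (hv : 0 < v) (m : E d) :
    ∫⁻ x, gdens d m v x = 1 := by
  have hshift : ∫⁻ x, gdens d m v x = ∫⁻ x, gdens d 0 v x := by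
    calc ∫⁻ x, gdens d m v x = ∫⁻ x, gdens d m v x ∂(Measure.map (· + m) volume) := by
          rw [map_add_right_eq_self]
      _ = ∫⁻ x, gdens d m v (x + m) := lintegral_map (measurable_gdens m v) (measurable_add_const m)
      _ = ∫⁻ x, gdens d 0 v x := by
          refine lintegral_congr fun x => ?_
          simp [gdens, add_sub_cancel_right]
  rw [hshift]
  have hb : 0 < 1 / (2 * v) := by positivity
  have hpt : ∀ x : E d, gdens d 0 v x
      = ENNReal.ofReal ((2 * π * v) ^ (-(d:ℝ)/2) * rexp (-(1/(2*v)) * ‖x‖ ^ 2)) := by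
    intro x
    simp only [gdens, sub_zero]
    congr 2
    field_simp
  simp_rw [hpt]
  have hint : Integrable (fun x : E d => (2 * π * v) ^ (-(d:ℝ)/2) * rexp (-(1/(2*v)) * ‖x‖ ^ 2)) :=
    (integrable_rexp_neg_mul_sq_norm hb).const_mul _
  have hnn : 0 ≤ᵐ[volume] fun x : E d => (2 * π * v) ^ (-(d:ℝ)/2) * rexp (-(1/(2*v)) * ‖x‖ ^ 2) :=
    Filter.Eventually.of_forall fun x => by positivity
  rw [← ofReal_integral_eq_lintegral_ofReal hint hnn, integral_const_mul,
    integral_rexp_neg_mul_sq_norm' hb]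
  have h2 : π / (1 / (2 * v)) = 2 * π * v := by field_simp
  rw [h2, ← Real.rpow_add (by positivity)]
  have h3 : (-(d:ℝ)/2 + (d:ℝ)/2) = 0 := by ring
  rw [h3, Real.rpow_zero, ENNReal.ofReal_one]

lemma isProbabilityMeasure_gaussian {v : ℝ} (hv : 0 < v) (m : E d) :
    IsProbabilityMeasure (gaussian d m v) := by
  constructor
  rw [gaussian_eq, withDensity_apply _ MeasurableSet.univ, setLIntegral_univ, lintegral_gdens hv]

lemma gaussian_map_add {v : ℝ} (m : E d) :
    Measure.map (fun u => m + u) (gaussian d 0 v) = gaussian d m v := by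
  ext s hs
  rw [Measure.map_apply (measurable_const_add m) hs, gaussian_eq, gaussian_eq,
    withDensity_apply _ (hs.preimage (measurable_const_add m)), withDensity_apply _ hs,
    ← lintegral_indicator (hs.preimage (measurable_const_add m)), ← lintegral_indicator hs]
  calc ∫⁻ x, ((fun u => m + u) ⁻¹' s).indicator (gdens d 0 v) x
      = ∫⁻ x, s.indicator (gdens d m v) (m + x) := by
        refine lintegral_congr fun x => ?_
        simp only [Set.indicator, Set.mem_preimage, gdens, add_sub_cancel_left, sub_zero]
        rfl
    _ = ∫⁻ x, s.indicator (gdens d m v) x ∂(Measure.map (m + ·) volume) := by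
        rw [lintegral_map ((measurable_gdens m v).indicator hs) (measurable_const_add m)]
    _ = ∫⁻ x, s.indicator (gdens d m v) x := by rw [map_add_left_eq_self]


section Step
variable {σ q : ℝ}

def grat (w : E d) (σ : ℝ) (u : E d) : ℝ≥0∞ :=
  ENNReal.ofReal (rexp ((2 * ⟪u, w⟫ - ‖w‖ ^ 2) / (2 * σ ^ 2)))

lemma measurable_inner_right (w : E d) : Measurable fun u : E d => ⟪u, w⟫ :=
  (continuous_id.inner continuous_const).measurable

lemma measurable_ofReal_exp {α : Type*} [MeasurableSpace α] {f : α → ℝ} (hf : Measurable f) :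
    Measurable fun u => ENNReal.ofReal (rexp (f u)) :=
  ENNReal.measurable_ofReal.comp (Real.measurable_exp.comp hf)

lemma measurable_grat (w : E d) (σ : ℝ) : Measurable (grat w σ) := by
  unfold grat
  exact measurable_ofReal_exp ((((measurable_inner_right w).const_mul 2).sub
    measurable_const).div_const _)

lemma gaussian_withDensity (hσ : 0 < σ) (w : E d) :
    gaussian d w (σ ^ 2) = (gaussian d 0 (σ ^ 2)).withDensity (grat w σ) := by
  rw [gaussian_eq, gaussian_eq, ← withDensity_mul _ (measurable_gdens 0 _) (measurable_grat w σ)]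
  congr 1; funext u
  show gdens d w (σ^2) u = _
  have hσ2 : (0:ℝ) < 2 * σ ^ 2 := by positivity
  simp only [Pi.mul_apply, gdens, grat, sub_zero, ← ENNReal.ofReal_mul
    (by positivity : (0:ℝ) ≤ (2 * π * σ^2) ^ (-(d:ℝ)/2) * rexp (-‖u‖^2/(2*σ^2)))]
  have h := norm_sub_sq_real u w
  have hexp : rexp (-‖u - w‖ ^ 2 / (2 * σ ^ 2))
      = rexp (-‖u‖ ^ 2 / (2 * σ ^ 2)) * rexp ((2 * ⟪u, w⟫ - ‖w‖ ^ 2) / (2 * σ ^ 2)) := by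
    rw [← Real.exp_add]
    congr 1
    linear_combination (-(1:ℝ)/(2*σ^2)) * h
  rw [hexp]; ring

lemma lintegral_grat_rpow (hσ : 0 < σ) (hq : 0 < q) (w : E d) :
    ∫⁻ u, (grat w σ u) ^ q ∂(gaussian d 0 (σ ^ 2))
      = ENNReal.ofReal (rexp ((q ^ 2 - q) * ‖w‖ ^ 2 / (2 * σ ^ 2))) := by
  have hσ2 : (0:ℝ) < σ ^ 2 := by positivity
  have h1 : ∀ u : E d, (grat w σ u) ^ q
      = ENNReal.ofReal (rexp ((2 * ⟪u, w⟫ - ‖w‖ ^ 2) / (2 * σ ^ 2) * q)) := by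
    intro u
    rw [grat, ENNReal.ofReal_rpow_of_pos (Real.exp_pos _), ← Real.exp_mul]
  simp_rw [h1]
  rw [gaussian_eq, lintegral_withDensity_eq_lintegral_mul _ (measurable_gdens 0 _)
    (show Measurable fun u : E d => ENNReal.ofReal (rexp ((2 * ⟪u, w⟫ - ‖w‖ ^ 2) / (2 * σ ^ 2) * q)) from
      measurable_ofReal_exp (((((measurable_inner_right w).const_mul 2).sub
      measurable_const).div_const _).mul_const _))]
  have h2 : ∀ u : E d, (gdens d 0 (σ^2) * fun u => ENNReal.ofReal
        (rexp ((2 * ⟪u, w⟫ - ‖w‖ ^ 2) / (2 * σ ^ 2) * q))) u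
      = ENNReal.ofReal (rexp ((q ^ 2 - q) * ‖w‖ ^ 2 / (2 * σ ^ 2))) * gdens d (q • w) (σ^2) u := by
    intro u
    simp only [Pi.mul_apply, gdens, sub_zero,
      ← ENNReal.ofReal_mul (by positivity : (0:ℝ) ≤ (2 * π * σ^2) ^ (-(d:ℝ)/2) * rexp (-‖u‖^2/(2*σ^2)))]
    rw [← ENNReal.ofReal_mul (by positivity)]
    congr 1
    have hns : ‖u - q • w‖ ^ 2 = ‖u‖ ^ 2 - 2 * (q * ⟪u, w⟫) + q ^ 2 * ‖w‖ ^ 2 := by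
      rw [norm_sub_sq_real, real_inner_smul_right, norm_smul]
      simp [mul_pow, sq_abs]
    have hexp : rexp (-‖u‖^2/(2*σ^2)) * rexp ((2 * ⟪u, w⟫ - ‖w‖ ^ 2) / (2 * σ ^ 2) * q)
        = rexp ((q ^ 2 - q) * ‖w‖ ^ 2 / (2 * σ ^ 2)) * rexp (-‖u - q • w‖ ^ 2 / (2 * σ ^ 2)) := by
      rw [← Real.exp_add, ← Real.exp_add]
      congr 1
      linear_combination ((1:ℝ)/(2*σ^2)) * hns
    rw [mul_assoc, hexp]; ring
  simp_rw [h2]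
  rw [lintegral_const_mul _ (measurable_gdens _ _), lintegral_gdens hσ2, mul_one]

lemma step_holder (hσ : 0 < σ) (hq : 1 < q) {F : E d → ℝ≥0∞} (hF : Measurable F) (w : E d) :
    ∫⁻ u, F u ∂(gaussian d w (σ ^ 2))
      ≤ ENNReal.ofReal (rexp ((q - 1) * ‖w‖ ^ 2 / (2 * σ ^ 2))) *
        (∫⁻ u, (F u) ^ (q / (q - 1)) ∂(gaussian d 0 (σ ^ 2))) ^ ((q - 1) / q) := by
  have hq1 : (0:ℝ) < q - 1 := by linarith
  have hq0 : (0:ℝ) < q := by linarith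
  have hpq : (q / (q - 1)).HolderConjugate q := by
    rw [Real.holderConjugate_iff]; constructor
    · rw [lt_div_iff₀ hq1]; linarith
    · field_simp; ring
  rw [gaussian_withDensity hσ w, lintegral_withDensity_eq_lintegral_mul _ (measurable_grat w σ) hF]
  have hmul : ∀ u, (grat w σ * F) u = (F * grat w σ) u := fun u => mul_comm _ _
  calc ∫⁻ u, (grat w σ * F) u ∂(gaussian d 0 (σ^2))
      = ∫⁻ u, (F * grat w σ) u ∂(gaussian d 0 (σ^2)) := by simp_rw [hmul]
    _ ≤ (∫⁻ u, (F u) ^ (q/(q-1)) ∂(gaussian d 0 (σ^2))) ^ (1/(q/(q-1))) *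
        (∫⁻ u, (grat w σ u) ^ q ∂(gaussian d 0 (σ^2))) ^ (1/q) :=
        ENNReal.lintegral_mul_le_Lp_mul_Lq _ hpq hF.aemeasurable (measurable_grat w σ).aemeasurable
    _ = ENNReal.ofReal (rexp ((q - 1) * ‖w‖ ^ 2 / (2 * σ ^ 2))) *
        (∫⁻ u, (F u) ^ (q / (q - 1)) ∂(gaussian d 0 (σ ^ 2))) ^ ((q - 1) / q) := by
        rw [lintegral_grat_rpow hσ hq0 w, ENNReal.ofReal_rpow_of_pos (Real.exp_pos _),
          ← Real.exp_mul, one_div_div, mul_comm]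
        congr 3
        field_simp
end Step

section Plumbing
variable {α β γ : Type*} [MeasurableSpace α] [MeasurableSpace β] [MeasurableSpace γ]

lemma measurable_map_fun {f : α → β → γ} (hf : Measurable (Function.uncurry f))
    (ν : Measure β) [SFinite ν] : Measurable fun a => ν.map (f a) := by
  apply Measure.measurable_measure.mpr
  intro s hs
  have heq : ∀ a, ν.map (f a) s = ν (Prod.mk a ⁻¹' (Function.uncurry f ⁻¹' s)) := by
    intro a
    rw [Measure.map_apply (show Measurable (f a) from hf.comp measurable_prodMk_left) hs]
    rfl
  simp_rw [heq]
  exact measurable_measure_prodMk_left (hf hs)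

lemma isProbabilityMeasure_bind {μ : Measure α} [IsProbabilityMeasure μ] {κ : α → Measure β}
    (hκ : Measurable κ) (h : ∀ a, IsProbabilityMeasure (κ a)) :
    IsProbabilityMeasure (μ.bind κ) := by
  constructor
  rw [Measure.bind_apply MeasurableSet.univ hκ.aemeasurable]
  have : ∀ a, κ a Set.univ = 1 := fun a => (h a).measure_univ
  simp_rw [this, lintegral_one, measure_univ]

lemma map_bind' (μ : Measure α) {κ : α → Measure β} (hκ : Measurable κ) {g : β → γ}
    (hg : Measurable g) : (μ.bind κ).map g = μ.bind (fun a => (κ a).map g) := by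
  ext s hs
  have hside : Measurable fun a => Measure.map g (κ a) := (Measure.measurable_map _ hg).comp hκ
  rw [Measure.map_apply hg hs, Measure.bind_apply (hs.preimage hg) hκ.aemeasurable,
    Measure.bind_apply hs hside.aemeasurable]
  refine lintegral_congr fun a => ?_
  rw [Measure.map_apply hg hs]

lemma bind_map' (μ : Measure α) {g : α → β} (hg : Measurable g) {κ : β → Measure γ}
    (hκ : Measurable κ) : (μ.map g).bind κ = μ.bind (κ ∘ g) := by
  ext s hs
  rw [Measure.bind_apply hs hκ.aemeasurable,
    lintegral_map (show Measurable fun b => κ b s from (Measure.measurable_coe hs).comp hκ) hg,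
    Measure.bind_apply hs (hκ.comp hg).aemeasurable]
  rfl
end Plumbing

lemma measurable_snoc {t : ℕ} :
    Measurable (fun p : (Fin t → E d) × E d => (Fin.snoc p.1 p.2 : Fin (t+1) → E d)) := by
  apply measurable_pi_lambda
  intro i
  induction i using Fin.lastCases with
  | last => simp only [Fin.snoc_last]; exact measurable_snd
  | cast j => simp only [Fin.snoc_castSucc]; exact (measurable_pi_apply j).comp measurable_fst

lemma measurable_init {t : ℕ} :
    Measurable (fun η : Fin (t+1) → E d => (Fin.init η : Fin t → E d)) := by
  apply measurable_pi_lambda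
  intro i
  exact measurable_pi_apply _

/-- driving-noise measures: coordinate `t` has law `N(w t (past), σ²)` -/
def noise (w : (t : ℕ) → (Fin t → E d) → E d) (σ : ℝ) : (t : ℕ) → Measure (Fin t → E d)
  | 0 => Measure.dirac (fun i => i.elim0)
  | t+1 => (noise w σ t).bind fun η =>
      (gaussian d 0 (σ^2)).map (fun u => (Fin.snoc η (w t η + u) : Fin (t+1) → E d))

section Noise
variable {σ q : ℝ} {w : (t : ℕ) → (Fin t → E d) → E d}

lemma measurable_noise_kernel (hσ : 0 < σ) {t : ℕ} (hw : Measurable (w t)) :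
    Measurable fun η : Fin t → E d =>
      (gaussian d 0 (σ^2)).map (fun u => (Fin.snoc η (w t η + u) : Fin (t+1) → E d)) := by
  haveI := isProbabilityMeasure_gaussian (by positivity : (0:ℝ) < σ^2) (0 : E d)
  exact measurable_map_fun
    (show Measurable (Function.uncurry fun (η : Fin t → E d) (u : E d) =>
        (Fin.snoc η (w t η + u) : Fin (t+1) → E d))
      from measurable_snoc.comp ((measurable_fst).prodMk
      ((hw.comp measurable_fst).add measurable_snd))) _

lemma isProbabilityMeasure_noise (hσ : 0 < σ) (hw : ∀ t, Measurable (w t)) (t : ℕ) :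
    IsProbabilityMeasure (noise w σ t) := by
  induction t with
  | zero => exact Measure.dirac.isProbabilityMeasure
  | succ t ih =>
    haveI := ih
    haveI := isProbabilityMeasure_gaussian (by positivity : (0:ℝ) < σ^2) (0 : E d)
    refine isProbabilityMeasure_bind (measurable_noise_kernel hσ (hw t)) fun η => ?_
    exact Measure.isProbabilityMeasure_map
      ((show Measurable fun u : E d => (Fin.snoc η (w t η + u) : Fin (t+1) → E d)
        from measurable_snoc.comp
        ((measurable_const.prodMk (measurable_const_add _)))).aemeasurable)

lemma measurable_gaussian_of {α : Type*} [MeasurableSpace α] (hσ : 0 < σ) {m : α → E d}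
    (hm : Measurable m) : Measurable fun a => gaussian d (m a) (σ^2) := by
  haveI := isProbabilityMeasure_gaussian (by positivity : (0:ℝ) < σ^2) (0 : E d)
  have h : (fun a => gaussian d (m a) (σ^2))
      = fun a => (gaussian d 0 (σ^2)).map (fun u => m a + u) :=
    funext fun a => (gaussian_map_add _).symm
  rw [h]
  exact measurable_map_fun
    (show Measurable (Function.uncurry fun (a : α) (u : E d) => m a + u)
      from (hm.comp measurable_fst).add measurable_snd) _

lemma law_eq (hσ : 0 < σ) {ψ : E d → E d} (hψ : Measurable ψ)
    (hw : ∀ t, Measurable (w t)) {Y : (t : ℕ) → (Fin t → E d) → E d}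
    (hY : ∀ t, Measurable (Y t)) (y0 : E d)
    (hY0 : ∀ η, Y 0 η = y0)
    (hYs : ∀ t (η : Fin t → E d) (v : E d), Y (t+1) (Fin.snoc η v) = ψ (Y t η) + (v - w t η))
    (t : ℕ) :
    Measure.map (Y t) (noise w σ t) = lawSeq (fun _ => ψ) (fun _ => σ^2) (Measure.dirac y0) t := by
  induction t with
  | zero =>
    show Measure.map (Y 0) (Measure.dirac _) = Measure.dirac y0
    rw [Measure.map_dirac' (hY 0), hY0]
  | succ t ih =>
    show Measure.map (Y (t+1)) ((noise w σ t).bind _)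
      = (lawSeq _ _ _ t).bind fun x => gaussian d (ψ x) (σ^2)
    rw [map_bind' _ (measurable_noise_kernel hσ (hw t)) (hY (t+1)), ← ih,
      bind_map' _ (hY t) (measurable_gaussian_of hσ hψ)]
    congr 1
    funext η
    have hmm : Measurable fun u : E d => (Fin.snoc η (w t η + u) : Fin (t+1) → E d) :=
      measurable_snoc.comp (measurable_const.prodMk (measurable_const_add _))
    rw [Measure.map_map (hY (t+1)) hmm]
    have hcomp : (Y (t+1) ∘ fun u => Fin.snoc η (w t η + u)) = fun u => ψ (Y t η) + u := by
      funext u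
      simp only [Function.comp_apply, hYs t η (w t η + u), add_sub_cancel_left]
    rw [hcomp, gaussian_map_add]
    rfl

lemma lintegral_noise_succ (hσ : 0 < σ) {t : ℕ} (hw : Measurable (w t))
    {F : (Fin (t+1) → E d) → ℝ≥0∞} (hF : Measurable F) :
    ∫⁻ η, F η ∂(noise w σ (t+1))
      = ∫⁻ η, ∫⁻ u, F (Fin.snoc η (w t η + u)) ∂(gaussian d 0 (σ^2)) ∂(noise w σ t) := by
  show ∫⁻ η, F η ∂((noise w σ t).bind _) = _
  rw [Measure.lintegral_bind (measurable_noise_kernel hσ hw).aemeasurable hF.aemeasurable]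
  refine lintegral_congr fun η => ?_
  rw [lintegral_map hF (show Measurable fun u : E d => (Fin.snoc η (w t η + u) : Fin (t+1) → E d)
    from measurable_snoc.comp (measurable_const.prodMk (measurable_const_add _)))]

lemma noise_holder (hσ : 0 < σ) (hq : 1 < q) (hw : ∀ t, Measurable (w t)) {A : ℕ → ℝ}
    (hA : ∀ t η, ‖w t η‖ ≤ A t) (t : ℕ) :
    ∀ F : (Fin t → E d) → ℝ≥0∞, Measurable F →
      ∫⁻ η, F η ∂(noise w σ t)
        ≤ ENNReal.ofReal (rexp ((q-1)/(2*σ^2) * ∑ s ∈ range t, A s ^ 2)) *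
          (∫⁻ η, F η ^ (q/(q-1)) ∂(noise (fun _ _ => (0:E d)) σ t)) ^ ((q-1)/q) := by
  have hq1 : (0:ℝ) < q - 1 := by linarith
  have hq0 : (0:ℝ) < q := by linarith
  have hexp1 : (q/(q-1)) * ((q-1)/q) = 1 := by field_simp
  haveI : IsProbabilityMeasure (gaussian d 0 (σ^2)) :=
    isProbabilityMeasure_gaussian (by positivity) _
  induction t with
  | zero =>
    intro F hF
    show ∫⁻ η, F η ∂(Measure.dirac _) ≤ _ * (∫⁻ η, F η ^ _ ∂(Measure.dirac _)) ^ _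
    rw [lintegral_dirac' _ hF,
      lintegral_dirac' _ (show Measurable fun η : Fin 0 → E d => F η ^ (q/(q-1)) from
        ENNReal.continuous_rpow_const.measurable.comp hF),
      ← ENNReal.rpow_mul, hexp1, ENNReal.rpow_one]
    simp
  | succ t ih =>
    intro F hF
    have hsnoc_pair : Measurable fun p : (Fin t → E d) × E d =>
        F (Fin.snoc p.1 p.2) ^ (q/(q-1)) :=
      ENNReal.continuous_rpow_const.measurable.comp (hF.comp measurable_snoc)
    have hinner_meas : Measurable fun η : Fin t → E d =>
        ∫⁻ u, F (Fin.snoc η u) ^ (q/(q-1)) ∂(gaussian d 0 (σ^2)) :=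
      Measurable.lintegral_prod_right' hsnoc_pair
    set g : (Fin t → E d) → ℝ≥0∞ :=
      fun η => (∫⁻ u, F (Fin.snoc η u) ^ (q/(q-1)) ∂(gaussian d 0 (σ^2))) ^ ((q-1)/q) with hg
    have hgmeas : Measurable g :=
      ENNReal.continuous_rpow_const.measurable.comp hinner_meas
    have hstep : ∀ η : Fin t → E d,
        ∫⁻ u, F (Fin.snoc η (w t η + u)) ∂(gaussian d 0 (σ^2))
          ≤ ENNReal.ofReal (rexp ((q-1) * A t ^ 2 / (2*σ^2))) * g η := by
      intro η
      have hsnocη : Measurable fun v : E d => (Fin.snoc η v : Fin (t+1) → E d) :=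
        measurable_snoc.comp (measurable_const.prodMk measurable_id)
      have hrw : ∫⁻ u, F (Fin.snoc η (w t η + u)) ∂(gaussian d 0 (σ^2))
          = ∫⁻ v, F (Fin.snoc η v) ∂(gaussian d (w t η) (σ^2)) := by
        rw [← gaussian_map_add (w t η),
          lintegral_map (show Measurable fun v : E d => F (Fin.snoc η v) from hF.comp hsnocη)
            (measurable_const_add _)]
      rw [hrw]
      refine (step_holder hσ hq (hF.comp hsnocη) (w t η)).trans ?_
      refine mul_le_mul_left (ENNReal.ofReal_le_ofReal (Real.exp_le_exp.2 ?_)) _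
      have hAt : ‖w t η‖ ^ 2 ≤ A t ^ 2 := by
        have h1 := hA t η
        nlinarith [norm_nonneg (w t η)]
      apply div_le_div_of_nonneg_right ?_ (by positivity)
      · nlinarith
    calc ∫⁻ η, F η ∂(noise w σ (t+1))
        = ∫⁻ η, ∫⁻ u, F (Fin.snoc η (w t η + u)) ∂(gaussian d 0 (σ^2)) ∂(noise w σ t) :=
          lintegral_noise_succ hσ (hw t) hF
      _ ≤ ∫⁻ η, ENNReal.ofReal (rexp ((q-1) * A t ^ 2 / (2*σ^2))) * g η ∂(noise w σ t) :=
          lintegral_mono hstep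
      _ = ENNReal.ofReal (rexp ((q-1) * A t ^ 2 / (2*σ^2))) * ∫⁻ η, g η ∂(noise w σ t) :=
          lintegral_const_mul _ hgmeas
      _ ≤ ENNReal.ofReal (rexp ((q-1) * A t ^ 2 / (2*σ^2))) *
          (ENNReal.ofReal (rexp ((q-1)/(2*σ^2) * ∑ s ∈ range t, A s ^ 2)) *
            (∫⁻ η, g η ^ (q/(q-1)) ∂(noise (fun _ _ => (0:E d)) σ t)) ^ ((q-1)/q)) :=
          mul_le_mul_right (ih g hgmeas) _
      _ = ENNReal.ofReal (rexp ((q-1)/(2*σ^2) * ∑ s ∈ range (t+1), A s ^ 2)) *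
          (∫⁻ η, F η ^ (q/(q-1)) ∂(noise (fun _ _ => (0:E d)) σ (t+1))) ^ ((q-1)/q) := by
          have hgp : ∀ η, g η ^ (q/(q-1))
              = ∫⁻ u, F (Fin.snoc η u) ^ (q/(q-1)) ∂(gaussian d 0 (σ^2)) := by
            intro η
            rw [hg, ← ENNReal.rpow_mul]
            have : (q-1)/q * (q/(q-1)) = 1 := by field_simp
            rw [this, ENNReal.rpow_one]
          have hP : ∫⁻ η, F η ^ (q/(q-1)) ∂(noise (fun _ _ => (0:E d)) σ (t+1))
              = ∫⁻ η, g η ^ (q/(q-1)) ∂(noise (fun _ _ => (0:E d)) σ t) := by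
            rw [lintegral_noise_succ (w := fun _ _ => (0:E d)) hσ
              (measurable_const : Measurable fun _ : Fin t → E d => (0:E d))
              (show Measurable fun η : Fin (t+1) → E d => F η ^ (q/(q-1)) from
                ENNReal.continuous_rpow_const.measurable.comp hF)]
            refine lintegral_congr fun η => ?_
            rw [hgp η]
            refine lintegral_congr fun u => ?_
            rw [zero_add]
          rw [hP, ← mul_assoc, ← ENNReal.ofReal_mul (by positivity), ← Real.exp_add,
            Finset.sum_range_succ]
          congr 3
          ring
end Noise

lemma renyi_le_of_forall_lintegral {μ ν : Measure (E d)} [IsProbabilityMeasure μ]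
    [IsProbabilityMeasure ν] (hq : 1 < q) {K : ℝ} (hK : 0 ≤ K)
    (h : ∀ F : E d → ℝ≥0∞, Measurable F →
      ∫⁻ x, F x ∂μ ≤ ENNReal.ofReal (rexp K) * (∫⁻ x, F x ^ (q/(q-1)) ∂ν) ^ ((q-1)/q)) :
    renyiDiv q μ ν ≤ (q/(q-1)) * K := by
  have hq1 : (0:ℝ) < q - 1 := by linarith
  have hq0 : (0:ℝ) < q := by linarith
  set r : E d → ℝ≥0∞ := μ.rnDeriv ν with hrdef
  have hr : Measurable r := Measure.measurable_rnDeriv μ ν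
  set C : ℝ≥0∞ := ENNReal.ofReal (rexp K) with hCdef
  have hCq : C ^ q = ENNReal.ofReal (rexp K ^ q) := ENNReal.ofReal_rpow_of_pos (Real.exp_pos _)
  -- truncated moments
  have key : ∀ n : ℕ, ∫⁻ x, (min (r x) n) ^ q ∂ν ≤ C ^ q := by
    intro n
    set A : ℝ≥0∞ := ∫⁻ x, (min (r x) n) ^ q ∂ν with hAdef
    have hFnm : Measurable fun x => (min (r x) n) ^ (q-1) :=
      ENNReal.continuous_rpow_const.measurable.comp (hr.min measurable_const)
    have hAq : ∀ x : E d, (min (r x) n) ^ (q-1) * min (r x) n = (min (r x) n) ^ q := by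
      intro x
      rcases eq_or_ne (min (r x) n) 0 with h0 | h0
      · rw [h0, ENNReal.zero_rpow_of_pos hq1, ENNReal.zero_rpow_of_pos hq0, zero_mul]
      · have hfin : min (r x) n ≠ ⊤ :=
          ne_top_of_le_ne_top (ENNReal.natCast_ne_top n) (min_le_right _ _)
        calc (min (r x) n) ^ (q-1) * min (r x) n
            = (min (r x) n) ^ (q-1) * (min (r x) n) ^ (1:ℝ) := by rw [ENNReal.rpow_one]
          _ = (min (r x) n) ^ (q-1+1) := (ENNReal.rpow_add _ _ h0 hfin).symm
          _ = (min (r x) n) ^ q := by norm_num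
    have h1 : A ≤ ∫⁻ x, (min (r x) n) ^ (q-1) * r x ∂ν := by
      refine lintegral_mono fun x => ?_
      rw [← hAq x]
      exact mul_le_mul_right (min_le_left _ _) _
    have h2 : ∫⁻ x, (min (r x) n) ^ (q-1) * r x ∂ν ≤ ∫⁻ x, (min (r x) n) ^ (q-1) ∂μ := by
      have e1 : ∫⁻ x, (min (r x) n) ^ (q-1) * r x ∂ν
          = ∫⁻ x, (min (r x) n) ^ (q-1) ∂(ν.withDensity r) := by
        rw [lintegral_withDensity_eq_lintegral_mul _ hr hFnm]
        exact lintegral_congr fun x => mul_comm _ _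
      rw [e1]
      exact lintegral_mono' (Measure.withDensity_rnDeriv_le μ ν) le_rfl
    have h3 := h _ hFnm
    have h4 : ∫⁻ x, ((min (r x) n) ^ (q-1)) ^ (q/(q-1)) ∂ν = A := by
      refine lintegral_congr fun x => ?_
      rw [← ENNReal.rpow_mul]
      congr 1
      field_simp
    rw [h4] at h3
    have hchain : A ≤ C * A ^ ((q-1)/q) := le_trans h1 (le_trans h2 h3)
    have hAfin : A ≠ ⊤ := by
      have hb : A ≤ (n:ℝ≥0∞) ^ q * ν Set.univ := by
        rw [← lintegral_const]
        exact lintegral_mono fun x => ENNReal.rpow_le_rpow (min_le_right _ _) hq0.le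
      refine ne_top_of_le_ne_top ?_ hb
      rw [measure_univ, mul_one]
      exact ENNReal.rpow_ne_top_of_nonneg hq0.le (ENNReal.natCast_ne_top n)
    rcases eq_or_ne A 0 with hA0 | hA0
    · rw [hA0]; exact bot_le
    · have hsplit : A = A ^ ((q-1)/q) * A ^ (1/q) := by
        rw [← ENNReal.rpow_add _ _ hA0 hAfin]
        have : (q-1)/q + 1/q = 1 := by rw [← add_div, sub_add_cancel, div_self hq0.ne']
        rw [this, ENNReal.rpow_one]
      have hfacne : A ^ ((q-1)/q) ≠ 0 := by
        simp only [ne_eq, ENNReal.rpow_eq_zero_iff, not_or]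
        constructor
        · rintro ⟨h0, -⟩; exact hA0 h0
        · rintro ⟨htop, -⟩; exact hAfin htop
      have hfactop : A ^ ((q-1)/q) ≠ ⊤ :=
        ENNReal.rpow_ne_top_of_nonneg (by positivity) hAfin
      have hcancel : A ^ (1/q) ≤ C := by
        have h5 : A ^ ((q-1)/q) * A ^ (1/q) ≤ A ^ ((q-1)/q) * C := by
          rw [← hsplit]
          calc A ≤ C * A ^ ((q-1)/q) := hchain
            _ = A ^ ((q-1)/q) * C := mul_comm _ _
        exact (ENNReal.mul_le_mul_iff_right hfacne hfactop).mp h5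
      calc A = (A ^ (1/q)) ^ q := by
            rw [← ENNReal.rpow_mul]
            rw [show 1/q * q = 1 by field_simp, ENNReal.rpow_one]
        _ ≤ C ^ q := ENNReal.rpow_le_rpow hcancel hq0.le
  -- monotone convergence
  have hmeas_n : ∀ n : ℕ, Measurable fun x => (min (r x) n) ^ q := fun n =>
    ENNReal.continuous_rpow_const.measurable.comp (hr.min measurable_const)
  have hmono : Monotone fun (n : ℕ) (x : E d) => (min (r x) n) ^ q := by
    intro m n hmn
    refine fun x => ENNReal.rpow_le_rpow (min_le_min le_rfl ?_) hq0.le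
    exact_mod_cast Nat.cast_le.mpr hmn
  have hsup : ∀ x : E d, ⨆ n : ℕ, (min (r x) n) ^ q = r x ^ q := by
    intro x
    rcases eq_or_ne (r x) ⊤ with hx | hx
    · rw [hx, ENNReal.top_rpow_of_pos hq0, eq_top_iff]
      calc (⊤:ℝ≥0∞) = ⨆ n : ℕ, (n:ℝ≥0∞) := ENNReal.iSup_natCast.symm
        _ ≤ ⨆ n : ℕ, (min (⊤:ℝ≥0∞) n) ^ q := by
          refine iSup_mono fun n => ?_
          rw [min_eq_right le_top]
          calc (n:ℝ≥0∞) = (n:ℝ≥0∞) ^ (1:ℝ) := (ENNReal.rpow_one _).symm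
            _ ≤ _ := by
              rcases Nat.eq_zero_or_pos n with h0 | hpos
              · subst h0; simp
              · exact ENNReal.rpow_le_rpow_of_exponent_le (by exact_mod_cast hpos) hq.le
    · obtain ⟨n, hn⟩ := ENNReal.exists_nat_gt hx
      apply le_antisymm
      · exact iSup_le fun m => ENNReal.rpow_le_rpow (min_le_left _ _) hq0.le
      · exact le_iSup_of_le n (by rw [min_eq_left hn.le])
  have hL : ∫⁻ x, r x ^ q ∂ν ≤ C ^ q := by
    have e1 : ∫⁻ x, r x ^ q ∂ν = ⨆ n : ℕ, ∫⁻ x, (min (r x) n) ^ q ∂ν := by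
      rw [← lintegral_iSup hmeas_n hmono]
      exact lintegral_congr fun x => (hsup x).symm
    rw [e1]
    exact iSup_le key
  -- convert to Bochner
  have hrqmeas : Measurable fun x => r x ^ q := ENNReal.continuous_rpow_const.measurable.comp hr
  have hLfin : ∫⁻ x, r x ^ q ∂ν ≠ ⊤ :=
    ne_top_of_le_ne_top (by rw [hCq]; exact ENNReal.ofReal_ne_top) hL
  have hae : ∀ᵐ x ∂ν, r x ^ q < ⊤ := ae_lt_top hrqmeas hLfin
  have hint : ∫ x, ((r x).toReal) ^ q ∂ν = (∫⁻ x, r x ^ q ∂ν).toReal := by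
    rw [← integral_toReal hrqmeas.aemeasurable hae]
    exact integral_congr_ae (Filter.Eventually.of_forall fun x => ENNReal.toReal_rpow _ _)
  have htr : (∫⁻ x, r x ^ q ∂ν).toReal ≤ rexp K ^ q := by
    calc (∫⁻ x, r x ^ q ∂ν).toReal ≤ (C ^ q).toReal :=
          ENNReal.toReal_mono (by rw [hCq]; exact ENNReal.ofReal_ne_top) hL
      _ = rexp K ^ q := by rw [hCq, ENNReal.toReal_ofReal (by positivity)]
  have hlog : Real.log (∫ x, ((r x).toReal) ^ q ∂ν) ≤ q * K := by
    rw [hint]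
    rcases eq_or_lt_of_le (ENNReal.toReal_nonneg :
        (0:ℝ) ≤ (∫⁻ x, r x ^ q ∂ν).toReal) with h0 | h0
    · rw [← h0, Real.log_zero]
      positivity
    · calc Real.log (∫⁻ x, r x ^ q ∂ν).toReal ≤ Real.log (rexp K ^ q) :=
            Real.log_le_log h0 htr
        _ = q * Real.log (rexp K) := Real.log_rpow (Real.exp_pos _) _
        _ = q * K := by rw [Real.log_exp]
  show (q - 1)⁻¹ * Real.log (∫ x, ((μ.rnDeriv ν x).toReal) ^ q ∂ν) ≤ q/(q-1) * K
  calc (q - 1)⁻¹ * Real.log (∫ x, ((μ.rnDeriv ν x).toReal) ^ q ∂ν)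
      ≤ (q - 1)⁻¹ * (q * K) := by
        refine mul_le_mul_of_nonneg_left ?_ (by positivity)
        exact hlog
    _ = q/(q-1) * K := by ring

lemma measurable_clip (C : ℝ) : Measurable (clip (d := d) C) := by
  unfold clip
  exact ((measurable_const.div measurable_norm).min measurable_const).smul measurable_id

lemma norm_clip_le {C : ℝ} (hC : 0 ≤ C) (x : E d) : ‖clip C x‖ ≤ C := by
  unfold clip
  rcases eq_or_ne x 0 with rfl | hx
  · simpa using hC
  · have hxn : 0 < ‖x‖ := norm_pos_iff.mpr hx
    have hmn : 0 ≤ min (C / ‖x‖) 1 := le_min (by positivity) zero_le_one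
    rw [norm_smul, Real.norm_eq_abs, abs_of_nonneg hmn]
    rcases min_cases (C / ‖x‖) 1 with ⟨hmin, _⟩ | ⟨hmin, hlt⟩
    · rw [hmin, div_mul_cancel₀ _ hxn.ne']
    · rw [hmin, one_mul]
      have := (one_lt_div hxn).mp hlt
      linarith

lemma norm_sub_clip_le {C : ℝ} (hC : 0 ≤ C) (x : E d) :
    ‖x - clip C x‖ ≤ max (‖x‖ - C) 0 := by
  unfold clip
  rcases eq_or_ne x 0 with rfl | hx
  · simpa using le_max_right _ _
  · have hxn : 0 < ‖x‖ := norm_pos_iff.mpr hx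
    have h1 : x - min (C / ‖x‖) 1 • x = (1 - min (C / ‖x‖) 1) • x := by
      rw [sub_smul, one_smul]
    rw [h1, norm_smul, Real.norm_eq_abs,
      abs_of_nonneg (by simp [min_le_right (C / ‖x‖) 1] : (0:ℝ) ≤ 1 - min (C / ‖x‖) 1)]
    rcases min_cases (C / ‖x‖) 1 with ⟨hmin, _⟩ | ⟨hmin, _⟩
    · rw [hmin, sub_mul, one_mul, div_mul_cancel₀ _ hxn.ne']
      exact le_max_left _ _
    · rw [hmin]
      simpa using le_max_right (‖x‖ - C) 0

/-- the `x'` chain -/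
def xp (ψ : E d → E d) (y0 : E d) : (t : ℕ) → (Fin t → E d) → E d
  | 0 => fun _ => y0
  | t+1 => fun η => ψ (xp ψ y0 t (Fin.init η)) + η (Fin.last t)

/-- the shifted chain tracking `x` -/
def xt (ψ : E d → E d) (x0 x0' : E d) (a : ℕ → ℝ) : (t : ℕ) → (Fin t → E d) → E d
  | 0 => fun _ => x0
  | t+1 => fun η => ψ (xt ψ x0 x0' a t (Fin.init η)) +
      (η (Fin.last t) -
        clip (a t) (ψ (xt ψ x0 x0' a t (Fin.init η)) - ψ (xp ψ x0' t (Fin.init η))))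

/-- the shift -/
def wf (ψ : E d → E d) (x0 x0' : E d) (a : ℕ → ℝ) (t : ℕ) (η : Fin t → E d) : E d :=
  clip (a t) (ψ (xt ψ x0 x0' a t η) - ψ (xp ψ x0' t η))

variable {ψ : E d → E d} {x0 x0' y0 : E d} {a : ℕ → ℝ}

lemma measurable_xp (hψ : Measurable ψ) (y0 : E d) (t : ℕ) : Measurable (xp ψ y0 t) := by
  induction t with
  | zero => exact measurable_const
  | succ t ih =>
    exact ((hψ.comp (ih.comp measurable_init)).add (measurable_pi_apply _))

lemma measurable_xt (hψ : Measurable ψ) (t : ℕ) : Measurable (xt ψ x0 x0' a t) := by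
  induction t with
  | zero => exact measurable_const
  | succ t ih =>
    have h1 : Measurable fun η : Fin (t+1) → E d => ψ (xt ψ x0 x0' a t (Fin.init η)) :=
      hψ.comp (ih.comp measurable_init)
    have h2 : Measurable fun η : Fin (t+1) → E d => ψ (xp ψ x0' t (Fin.init η)) :=
      hψ.comp ((measurable_xp hψ x0' t).comp measurable_init)
    exact h1.add ((measurable_pi_apply _).sub ((measurable_clip _).comp (h1.sub h2)))

lemma measurable_wf (hψ : Measurable ψ) (t : ℕ) : Measurable (wf ψ x0 x0' a t) := by
  unfold wf
  exact (measurable_clip _).comp ((hψ.comp (measurable_xt hψ t)).sub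
    (hψ.comp (measurable_xp hψ x0' t)))

lemma xp_snoc (t : ℕ) (η : Fin t → E d) (v : E d) :
    xp ψ y0 (t+1) (Fin.snoc η v) = ψ (xp ψ y0 t η) + v := by
  simp only [xp, Fin.init_snoc, Fin.snoc_last]

lemma xt_snoc (t : ℕ) (η : Fin t → E d) (v : E d) :
    xt ψ x0 x0' a (t+1) (Fin.snoc η v)
      = ψ (xt ψ x0 x0' a t η) + (v - wf ψ x0 x0' a t η) := by
  simp only [xt, wf, Fin.init_snoc, Fin.snoc_last]

lemma tracking {D : ℕ → ℝ} {ρc b : ℝ} (T : ℕ)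
    (hcontr : ∀ x y : E d, ‖ψ x - ψ y‖ ≤ ρc * ‖x - y‖ + b) (hρc : 0 ≤ ρc)
    (ha : ∀ t, 0 ≤ a t)
    (hD0 : ‖x0 - x0'‖ ≤ D 0)
    (hrec : ∀ t, t + 1 ≤ T → ρc * D t + b - a t ≤ D (t+1))
    (hDnn : ∀ t, t + 1 ≤ T → 0 ≤ D (t+1)) :
    ∀ t, t ≤ T → ∀ η : Fin t → E d, ‖xt ψ x0 x0' a t η - xp ψ x0' t η‖ ≤ D t := by
  intro t
  induction t with
  | zero => intro _ η; exact hD0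
  | succ t ih =>
    intro hle η
    have hXd := ih (by omega) (Fin.init η)
    set X := xt ψ x0 x0' a t (Fin.init η) with hX
    set Xp := xp ψ x0' t (Fin.init η) with hXp
    set δ := ψ X - ψ Xp with hδ
    have hdiff : xt ψ x0 x0' a (t+1) η - xp ψ x0' (t+1) η = δ - clip (a t) δ := by
      show ψ X + (η (Fin.last t) - clip (a t) δ) - (ψ Xp + η (Fin.last t)) = δ - clip (a t) δ
      rw [hδ]; abel
    rw [hdiff]
    refine (norm_sub_clip_le (ha t) δ).trans (max_le ?_ (hDnn t hle))
    have h2 : ‖δ‖ ≤ ρc * D t + b := by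
      refine (hcontr X Xp).trans ?_
      have := mul_le_mul_of_nonneg_left hXd hρc
      linarith
    linarith [hrec t hle]

/-! arithmetic -/

lemma arith_rec {ρ b B Z co : ℝ} (T : ℕ) (hρ0 : 0 < ρ) (hT2 : (1:ℝ) - ρ^(2*T) ≠ 0)
    (hb : b = B * (1 - ρ)) (hco : co = Z*(1-ρ^2)/(1-ρ^(2*T))) (C0 : ℝ) (t : ℕ) :
    2*C0*ρ^(t+1) + B*(1-ρ^(t+1)) - Z*(ρ^T/ρ^(t+1))*(1-(ρ^(t+1))^2)/(1-ρ^(2*T))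
      = ρ * (2*C0*ρ^t + B*(1-ρ^t) - Z*(ρ^T/ρ^t)*(1-(ρ^t)^2)/(1-ρ^(2*T))) + b
        - co * ρ^T / ρ^(t+1) := by
  subst hb hco
  rw [pow_succ]
  have hx : ρ^t ≠ 0 := pow_ne_zero _ hρ0.ne'
  field_simp
  ring

lemma arith_nonneg {ρ C0 B : ℝ} {T t : ℕ} (htT : t ≤ T) (hρ0 : 0 < ρ) (hρ1 : ρ ≤ 1)
    (hv1 : ρ^(2*T) < 1) (hC0 : 0 ≤ C0) (hB : 0 ≤ B) :
    0 ≤ 2*C0*ρ^t + B*(1-ρ^t) - (2*C0*ρ^T + B*(1-ρ^T))*(ρ^T/ρ^t)*(1-(ρ^t)^2)/(1-ρ^(2*T)) := by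
  have hu0 : 0 < ρ^t := pow_pos hρ0 t
  have hv0 : 0 < ρ^T := pow_pos hρ0 T
  have huv : ρ^T ≤ ρ^t := pow_le_pow_of_le_one hρ0.le hρ1 htT
  have hu1 : ρ^t ≤ 1 := pow_le_one₀ hρ0.le hρ1
  have hs : 0 < 1 - ρ^(2*T) := by linarith
  have hpm : ρ^(2*T) = (ρ^T)^2 := by rw [mul_comm, pow_mul]
  rw [sub_nonneg, div_le_iff₀ hs]
  rw [hpm] at hs ⊢
  set u := ρ^t
  set v := ρ^T
  rw [show (2*C0*v + B*(1-v))*(v/u)*(1-u^2) = (2*C0*v + B*(1-v))*v*(1-u^2)/u by ring,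
    div_le_iff₀ hu0]
  have key : (2*C0*u + B*(1-u))*(1-v^2)*u - (2*C0*v + B*(1-v))*v*(1-u^2)
      = 2*C0*(u^2-v^2) + B*((1-u)*((1-v)*(u-v))) := by ring
  have h3 : v^2 ≤ u^2 := by nlinarith
  have e1 : 0 ≤ B*((1-u)*((1-v)*(u-v))) := by
    refine mul_nonneg hB (mul_nonneg (by linarith) (mul_nonneg (by nlinarith) (by linarith)))
  nlinarith [mul_nonneg hC0 (by linarith : (0:ℝ) ≤ u^2 - v^2)]

lemma arith_sum {ρ co : ℝ} (T : ℕ) (hρ0 : 0 < ρ) (hρ1 : ρ < 1) :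
    ∑ s ∈ range T, (co * ρ^(T-1-s))^2 = co^2*(1-ρ^(2*T))/(1-ρ^2) := by
  have hne : ρ^2 ≠ 1 := by nlinarith
  have h4 : (1:ℝ) - ρ^2 ≠ 0 := by nlinarith
  have hrefl := Finset.sum_range_reflect (fun s => (co * ρ^s)^2) T
  calc ∑ s ∈ range T, (co * ρ^(T-1-s))^2
      = ∑ s ∈ range T, (co * ρ^s)^2 := hrefl
    _ = ∑ s ∈ range T, co^2 * (ρ^2)^s := by
        refine Finset.sum_congr rfl fun s _ => ?_
        rw [mul_pow, pow_right_comm]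
    _ = co^2 * (((ρ^2)^T - 1)/(ρ^2 - 1)) := by rw [← Finset.mul_sum, geom_sum_eq hne]
    _ = co^2*(1-ρ^(2*T))/(1-ρ^2) := by
        rw [← pow_mul]
        have h5 : ρ^2 - 1 ≠ 0 := by intro h; exact h4 (by linarith)
        field_simp
        ring

lemma arith_DT {ρ C0 B : ℝ} (T : ℕ) (hρ0 : 0 < ρ) (hT2 : (1:ℝ) - ρ^(2*T) ≠ 0) :
    2*C0*ρ^T + B*(1-ρ^T)
      - (2*C0*ρ^T + B*(1-ρ^T))*(ρ^T/ρ^T)*(1-(ρ^T)^2)/(1-ρ^(2*T)) = 0 := by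
  have hρT : (ρ:ℝ)^T ≠ 0 := (pow_pos hρ0 T).ne'
  have h3 : ρ^(2*T) = (ρ^T)^2 := by rw [mul_comm, pow_mul]
  rw [h3] at hT2
  rw [div_self hρT, mul_one, h3]
  field_simp
  ring

end Stmt3

/-- Gradient clipping with regularization `λ`, constant step size and noise. -/
theorem stmt3 {d : ℕ} (hd : 1 ≤ d) (T : ℕ) (hT : 1 ≤ T) (q : ℝ) (hq : 1 < q)
    (C0 C1 : ℝ) (hC0 : 0 < C0) (hC1 : 0 < C1) (γ : ℝ) (hγ : 0 < γ)
    (lam : ℝ) (hlam : 0 < lam) (hgl : γ * lam < 1) (σ : ℝ) (hσ : 0 < σ)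
    (ρ : ℝ) (hρ : ρ = 1 - γ * lam)
    (G : E d → E d) (hG : Measurable G)
    (x0 x0' : E d) (hx0 : ‖x0‖ ≤ C0) (hx0' : ‖x0'‖ ≤ C0) :
    renyiDiv q
      (lawSeq (fun _ x => x - γ • (clip C1 (G x) + lam • x)) (fun _ => σ ^ 2)
        (Measure.dirac x0) T)
      (lawSeq (fun _ x => x - γ • (clip C1 (G x) + lam • x)) (fun _ => σ ^ 2)
        (Measure.dirac x0') T)
      ≤ (q / (2 * σ ^ 2)) * (γ * lam * (2 - γ * lam) / (1 - ρ ^ (2 * T))) *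
          (2 * C0 * ρ ^ T + (2 * C1 / lam) * (1 - ρ ^ T)) ^ 2 := by
  have hσ2 : (0:ℝ) < σ^2 := by positivity
  have hgl0 : 0 < γ * lam := mul_pos hγ hlam
  have hρ0 : 0 < ρ := by rw [hρ]; linarith
  have hρ1 : ρ < 1 := by rw [hρ]; linarith
  have hT2 : ρ^(2*T) < 1 := pow_lt_one₀ hρ0.le hρ1 (by omega)
  have hT2' : (1:ℝ) - ρ^(2*T) ≠ 0 := by linarith
  set ψ : E d → E d := fun x => x - γ • (clip C1 (G x) + lam • x) with hψdef
  have hψm : Measurable ψ := by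
    apply Measurable.sub measurable_id
    exact Measurable.const_smul
      (((Stmt3.measurable_clip C1).comp hG).add (measurable_id.const_smul lam)) γ
  set B : ℝ := 2*C1/lam with hBdef
  have hB0 : 0 ≤ B := by positivity
  set Z : ℝ := 2*C0*ρ^T + B*(1-ρ^T) with hZdef
  have hρTpos : 0 < ρ^T := pow_pos hρ0 T
  have hρT1 : ρ^T ≤ 1 := pow_le_one₀ hρ0.le hρ1.le
  have hZ0 : 0 ≤ Z := by
    rw [hZdef]
    have h1 : (0:ℝ) ≤ 2*C0*ρ^T := by positivity
    have h2 : (0:ℝ) ≤ B*(1-ρ^T) := mul_nonneg hB0 (by linarith)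
    linarith
  set co : ℝ := Z*(1-ρ^2)/(1-ρ^(2*T)) with hcodef
  have hρsq1 : ρ^2 < 1 := by nlinarith
  have hco0 : 0 ≤ co := by
    rw [hcodef]
    exact div_nonneg (mul_nonneg hZ0 (by linarith)) (by linarith)
  set a : ℕ → ℝ := fun s => co * ρ^(T-1-s) with hadef
  have ha0 : ∀ s, 0 ≤ a s := fun s => mul_nonneg hco0 (pow_pos hρ0 _).le
  set b : ℝ := 2*γ*C1 with hbdef
  have hbB : b = B * (1 - ρ) := by
    rw [hρ, hbdef, hBdef]
    field_simp
    ring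
  set D : ℕ → ℝ :=
    fun t => 2*C0*ρ^t + B*(1-ρ^t) - Z*(ρ^T/ρ^t)*(1-(ρ^t)^2)/(1-ρ^(2*T)) with hDdef
  have haT : ∀ t, t+1 ≤ T → a t = co * ρ^T / ρ^(t+1) := by
    intro t ht
    have h1 : T - 1 - t = T - (t+1) := by omega
    simp only [hadef, h1, pow_sub₀ ρ hρ0.ne' ht]
    ring
  have hrec : ∀ t, t+1 ≤ T → ρ * D t + b - a t = D (t+1) := by
    intro t ht
    rw [haT t ht]
    simp only [hDdef]
    exact (Stmt3.arith_rec T hρ0 hT2' hbB hcodef C0 t).symm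
  have hDnn : ∀ t, t ≤ T → 0 ≤ D t := by
    intro t ht
    simp only [hDdef, hZdef]
    exact Stmt3.arith_nonneg ht hρ0 hρ1.le hT2 (by linarith) hB0
  have hD0 : D 0 = 2*C0 := by simp only [hDdef]; norm_num
  have hDT : D T = 0 := by
    simp only [hDdef, hZdef]
    exact Stmt3.arith_DT T hρ0 hT2'
  have hcontr : ∀ x y : E d, ‖ψ x - ψ y‖ ≤ ρ * ‖x - y‖ + b := by
    intro x y
    have hdiff : ψ x - ψ y = ρ • (x - y) - γ • (clip C1 (G x) - clip C1 (G y)) := by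
      simp only [hψdef, hρ]
      module
    rw [hdiff]
    refine (norm_sub_le _ _).trans ?_
    rw [norm_smul, norm_smul, Real.norm_eq_abs, Real.norm_eq_abs,
      abs_of_nonneg hρ0.le, abs_of_nonneg hγ.le]
    have h2 : ‖clip C1 (G x) - clip C1 (G y)‖ ≤ 2*C1 := by
      refine (norm_sub_le _ _).trans ?_
      have e1 := Stmt3.norm_clip_le hC1.le (G x)
      have e2 := Stmt3.norm_clip_le hC1.le (G y)
      linarith
    have h3 := mul_le_mul_of_nonneg_left h2 hγ.le
    rw [hbdef]
    linarith
  set w : (t : ℕ) → (Fin t → E d) → E d := Stmt3.wf ψ x0 x0' a with hwdef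
  have hwm : ∀ t, Measurable (w t) := fun t => Stmt3.measurable_wf hψm t
  have hwA : ∀ t (η : Fin t → E d), ‖w t η‖ ≤ a t := by
    intro t η
    simp only [hwdef, Stmt3.wf]
    exact Stmt3.norm_clip_le (ha0 t) _
  have htrack := Stmt3.tracking (x0 := x0) (x0' := x0') (a := a) T hcontr hρ0.le ha0
      (by rw [hD0]; have := norm_sub_le x0 x0'; linarith)
      (fun t ht => le_of_eq (hrec t ht)) (fun t ht => hDnn (t+1) ht)
  have hXT : Stmt3.xt ψ x0 x0' a T = Stmt3.xp ψ x0' T := by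
    funext η
    have h1 := htrack T le_rfl η
    rw [hDT] at h1
    have h2 : Stmt3.xt ψ x0 x0' a T η - Stmt3.xp ψ x0' T η = 0 :=
      norm_le_zero_iff.mp h1
    exact sub_eq_zero.mp h2
  haveI hPμ : IsProbabilityMeasure (Stmt3.noise w σ T) :=
    Stmt3.isProbabilityMeasure_noise hσ hwm T
  haveI hPν : IsProbabilityMeasure (Stmt3.noise (fun _ _ => (0:E d)) σ T) :=
    Stmt3.isProbabilityMeasure_noise hσ (fun _ => measurable_const) T
  have hlawx : Measure.map (Stmt3.xt ψ x0 x0' a T) (Stmt3.noise w σ T)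
      = lawSeq (fun _ => ψ) (fun _ => σ^2) (Measure.dirac x0) T :=
    Stmt3.law_eq hσ hψm hwm (fun t => Stmt3.measurable_xt hψm t) x0 (fun _ => rfl)
      (fun t η v => Stmt3.xt_snoc t η v) T
  have hlawy : Measure.map (Stmt3.xp ψ x0' T) (Stmt3.noise (fun _ _ => (0:E d)) σ T)
      = lawSeq (fun _ => ψ) (fun _ => σ^2) (Measure.dirac x0') T :=
    Stmt3.law_eq hσ hψm (fun _ => measurable_const)
      (fun t => Stmt3.measurable_xp hψm x0' t) x0' (fun _ => rfl)
      (fun t η v => by rw [Stmt3.xp_snoc, sub_zero]) T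
  set K : ℝ := (q-1)/(2*σ^2) * ∑ s ∈ Finset.range T, a s ^ 2 with hKdef
  have hK0 : 0 ≤ K := by
    rw [hKdef]
    exact mul_nonneg (div_nonneg (by linarith) (by positivity))
      (Finset.sum_nonneg fun s _ => sq_nonneg _)
  haveI hμP : IsProbabilityMeasure
      (lawSeq (fun _ => ψ) (fun _ => σ^2) (Measure.dirac x0) T) := by
    rw [← hlawx]
    exact Measure.isProbabilityMeasure_map (Stmt3.measurable_xt hψm T).aemeasurable
  haveI hνP : IsProbabilityMeasure
      (lawSeq (fun _ => ψ) (fun _ => σ^2) (Measure.dirac x0') T) := by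
    rw [← hlawy]
    exact Measure.isProbabilityMeasure_map (Stmt3.measurable_xp hψm x0' T).aemeasurable
  have hbound : ∀ F : E d → ℝ≥0∞, Measurable F →
      ∫⁻ x, F x ∂(lawSeq (fun _ => ψ) (fun _ => σ^2) (Measure.dirac x0) T)
        ≤ ENNReal.ofReal (rexp K) *
          (∫⁻ x, F x ^ (q/(q-1))
              ∂(lawSeq (fun _ => ψ) (fun _ => σ^2) (Measure.dirac x0') T)) ^ ((q-1)/q) := by
    intro F hF
    rw [← hlawx, ← hlawy, hXT,
      lintegral_map hF (Stmt3.measurable_xp hψm x0' T),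
      lintegral_map (show Measurable fun x => F x ^ (q/(q-1)) from
        ENNReal.continuous_rpow_const.measurable.comp hF) (Stmt3.measurable_xp hψm x0' T)]
    exact Stmt3.noise_holder hσ hq hwm hwA T (fun η => F (Stmt3.xp ψ x0' T η))
      (hF.comp (Stmt3.measurable_xp hψm x0' T))
  have hmain := Stmt3.renyi_le_of_forall_lintegral hq hK0 hbound
  refine hmain.trans ?_
  have hsum : ∑ s ∈ Finset.range T, a s ^ 2 = Z^2*(1-ρ^2)/(1-ρ^(2*T)) := by
    simp only [hadef]
    rw [Stmt3.arith_sum T hρ0 hρ1, hcodef]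
    have h1 : (1:ℝ) - ρ^2 ≠ 0 := by linarith
    field_simp
  rw [hKdef, hsum]
  have hgl2 : γ * lam * (2 - γ * lam) = 1 - ρ^2 := by rw [hρ]; ring
  rw [hgl2]
  have hq1 : (q:ℝ) - 1 ≠ 0 := by linarith
  apply le_of_eq
  field_simp
end
end

section
/- Let ε ≥ 0, let K be a Markov kernel from ℝ^d to ℝ^d, and let μ, ν be probability measures on ℝ^d. Then the hockey-stick divergence satisfies E_ε(μK ‖ νK) ≤ E_ε(μ ‖ ν) · sup_{x_1, x_2 ∈ ℝ^d} E_ε( K(x_1) ‖ K(x_2) ), where μK denotes the probability measure obtained by applying the kernel K to μ, i.e., (μK)(A) = ∫ K(x)(A) dμ(x). -/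
open MeasureTheory Real Finset ENNReal

noncomputable section

section AuxHS

variable {d : ℕ}

lemma hs_bdd (ε : ℝ) (μ ν : Measure (E d)) [IsProbabilityMeasure μ] [IsProbabilityMeasure ν] :
    BddAbove (Set.range fun A : {s : Set (E d) // MeasurableSet s} =>
      ((μ A.1).toReal - Real.exp ε * (ν A.1).toReal)) := by
  refine ⟨1, ?_⟩
  rintro x ⟨B, rfl⟩
  have h1 : (μ B.1).toReal ≤ 1 := by
    simpa using ENNReal.toReal_mono ENNReal.one_ne_top (prob_le_one (μ := μ) (s := B.1))
  have h2 : 0 ≤ Real.exp ε * (ν B.1).toReal := by positivity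
  simp only []
  linarith

lemma hs_term_le (ε : ℝ) (μ ν : Measure (E d)) [IsProbabilityMeasure μ] [IsProbabilityMeasure ν]
    (A : {s : Set (E d) // MeasurableSet s}) :
    (μ A.1).toReal - Real.exp ε * (ν A.1).toReal ≤ hockeyStick ε μ ν :=
  le_ciSup (hs_bdd ε μ ν) A

lemma hs_nonneg (ε : ℝ) (μ ν : Measure (E d)) [IsProbabilityMeasure μ] [IsProbabilityMeasure ν] :
    0 ≤ hockeyStick ε μ ν := by
  have h := hs_term_le ε μ ν ⟨∅, MeasurableSet.empty⟩
  simpa using h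

lemma hs_le_one (ε : ℝ) (μ ν : Measure (E d)) [IsProbabilityMeasure μ] [IsProbabilityMeasure ν] :
    hockeyStick ε μ ν ≤ 1 := by
  apply ciSup_le
  intro A
  have h1 : (μ A.1).toReal ≤ 1 := by
    simpa using ENNReal.toReal_mono ENNReal.one_ne_top (prob_le_one (μ := μ) (s := A.1))
  have h2 : 0 ≤ Real.exp ε * (ν A.1).toReal := by positivity
  linarith

end AuxHS

set_option maxHeartbeats 1000000 in
/-- Lemma 1 (amplification by mixing): `E_ε(μK ‖ νK) ≤ E_ε(μ ‖ ν) · sup_{x₁,x₂} E_ε(K(x₁) ‖ K(x₂))`. -/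
theorem stmt12 {d : ℕ} (ε : ℝ) (hε : 0 ≤ ε)
    (K : ProbabilityTheory.Kernel (E d) (E d)) [ProbabilityTheory.IsMarkovKernel K]
    (μ ν : Measure (E d)) [IsProbabilityMeasure μ] [IsProbabilityMeasure ν] :
    hockeyStick ε (μ.bind fun x => K x) (ν.bind fun x => K x)
      ≤ hockeyStick ε μ ν * ⨆ p : E d × E d, hockeyStick ε (K p.1) (K p.2) := by
  classical
  have heε1 : (1:ℝ) ≤ Real.exp ε := Real.one_le_exp hε
  have heε0 : (0:ℝ) < Real.exp ε := Real.exp_pos ε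
  set c := ⨆ p : E d × E d, hockeyStick ε (K p.1) (K p.2) with hc
  set H := hockeyStick ε μ ν with hH
  have hc_bdd : BddAbove (Set.range fun p : E d × E d => hockeyStick ε (K p.1) (K p.2)) :=
    ⟨1, by rintro x ⟨p, rfl⟩; exact hs_le_one ε _ _⟩
  have hc0 : 0 ≤ c :=
    le_trans (hs_nonneg ε (K 0) (K 0)) (le_ciSup hc_bdd ((0 : E d), (0 : E d)))
  have hH0 : 0 ≤ H := hs_nonneg ε μ ν
  haveI hfin : IsFiniteMeasure (ENNReal.ofReal (Real.exp ε) • ν) := by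
    constructor
    rw [Measure.smul_apply, smul_eq_mul]
    exact ENNReal.mul_lt_top (by simp) (by simp [measure_lt_top])
  obtain ⟨S, hS, hSpos, hSneg⟩ :=
    hahn_decomposition (μ := μ) (ν := ENNReal.ofReal (Real.exp ε) • ν)
  have hsmul_apply : ∀ t : Set (E d),
      ((ENNReal.ofReal (Real.exp ε) • ν) t).toReal = Real.exp ε * (ν t).toReal := by
    intro t
    rw [Measure.smul_apply, smul_eq_mul, ENNReal.toReal_mul, ENNReal.toReal_ofReal heε0.le]
  set MS := (μ S).toReal with hMS
  set NS := (ν S).toReal with hNS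
  set MC := (μ Sᶜ).toReal with hMC
  set NC := (ν Sᶜ).toReal with hNC
  have hMsum : MS + MC = 1 := by
    rw [hMS, hMC, ← ENNReal.toReal_add (measure_ne_top μ S) (measure_ne_top μ Sᶜ),
      measure_add_measure_compl hS]
    simp
  have hNsum : NS + NC = 1 := by
    rw [hNS, hNC, ← ENNReal.toReal_add (measure_ne_top ν S) (measure_ne_top ν Sᶜ),
      measure_add_measure_compl hS]
    simp
  have hNS0 : 0 ≤ NS := ENNReal.toReal_nonneg
  have hMC0 : 0 ≤ MC := ENNReal.toReal_nonneg
  have hNSle : Real.exp ε * NS ≤ MS := by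
    rw [hNS, ← hsmul_apply S, hMS]
    exact ENNReal.toReal_mono (measure_ne_top μ S) (hSpos S hS subset_rfl)
  have hMCle : MC ≤ Real.exp ε * NC := by
    rw [hNC, ← hsmul_apply Sᶜ, hMC]
    exact ENNReal.toReal_mono (measure_ne_top _ Sᶜ) (hSneg Sᶜ hS.compl subset_rfl)
  set dlt := MS - Real.exp ε * NS with hdlt
  set bta := Real.exp ε * NC - MC with hbta
  have hdlt0 : 0 ≤ dlt := by rw [hdlt]; linarith
  have hbta0 : 0 ≤ bta := by rw [hbta]; linarith
  have hdlt_le_H : dlt ≤ H := by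
    have h := hs_term_le ε μ ν ⟨S, hS⟩
    rw [hdlt, hH]
    exact h
  have hdlt1 : dlt ≤ 1 := by
    rw [hdlt]
    nlinarith
  have hNsum' : Real.exp ε * NS + Real.exp ε * NC = Real.exp ε := by
    rw [← mul_add, hNsum, mul_one]
  have hbta_eq : bta = Real.exp ε - 1 + dlt := by rw [hbta, hdlt]; linarith
  have hle1 : (ENNReal.ofReal (Real.exp ε) • ν).restrict S ≤ μ.restrict S := by
    rw [Measure.le_iff]
    intro t ht
    rw [Measure.restrict_apply ht, Measure.restrict_apply ht]
    exact hSpos _ (ht.inter hS) Set.inter_subset_right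
  have hle2 : μ.restrict Sᶜ ≤ (ENNReal.ofReal (Real.exp ε) • ν).restrict Sᶜ := by
    rw [Measure.le_iff]
    intro t ht
    rw [Measure.restrict_apply ht, Measure.restrict_apply ht]
    exact hSneg _ (ht.inter hS.compl) Set.inter_subset_right
  -- reduce to a single measurable set
  apply ciSup_le
  rintro ⟨A, hA⟩
  have hKmeas : Measurable fun x => K x A := K.measurable_coe hA
  set g : E d → ℝ := fun x => (K x A).toReal with hgdef
  have hgm : Measurable g := hKmeas.ennreal_toReal
  have hg0 : ∀ x, 0 ≤ g x := fun x => ENNReal.toReal_nonneg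
  have hg1 : ∀ x, g x ≤ 1 := fun x => by
    simpa using ENNReal.toReal_mono ENNReal.one_ne_top (prob_le_one (μ := K x) (s := A))
  have hbind : ∀ (ρ : Measure (E d)), ((ρ.bind fun x => K x) A).toReal = ∫ x, g x ∂ρ := by
    intro ρ
    rw [Measure.bind_apply hA K.measurable.aemeasurable]
    exact (integral_toReal hKmeas.aemeasurable
      (ae_of_all _ fun x => lt_of_le_of_lt prob_le_one ENNReal.one_lt_top)).symm
  have hint : ∀ (ρ : Measure (E d)) [IsFiniteMeasure ρ], Integrable g ρ := by
    intro ρ _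
    refine (integrable_const (1:ℝ)).mono' hgm.aestronglyMeasurable (ae_of_all _ fun x => ?_)
    rw [Real.norm_eq_abs, abs_of_nonneg (hg0 x)]
    exact hg1 x
  have hsmulint : ∀ (ρ : Measure (E d)) (f : E d → ℝ),
      ∫ x, f x ∂(ENNReal.ofReal (Real.exp ε) • ρ) = Real.exp ε * ∫ x, f x ∂ρ := by
    intro ρ f
    rw [integral_smul_measure, ENNReal.toReal_ofReal heε0.le, smul_eq_mul]
  set IS := ∫ x in S, g x ∂μ with hIS
  set JS := ∫ x in S, g x ∂ν with hJS
  set IC := ∫ x in Sᶜ, g x ∂μ with hIC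
  set JC := ∫ x in Sᶜ, g x ∂ν with hJC
  set a := IS - Real.exp ε * JS with ha
  set b := Real.exp ε * JC - IC with hb
  have hsplitμ : ∫ x, g x ∂μ = IS + IC := (integral_add_compl hS (hint μ)).symm
  have hsplitν : ∫ x, g x ∂ν = JS + JC := (integral_add_compl hS (hint ν)).symm
  have hb0 : 0 ≤ b := by
    have hmono := integral_mono_measure hle2 (ae_of_all _ hg0)
      (hint ((ENNReal.ofReal (Real.exp ε) • ν).restrict Sᶜ))
    rw [Measure.restrict_smul, hsmulint (ν.restrict Sᶜ) g] at hmono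
    rw [hb]
    exact sub_nonneg.mpr hmono
  have hptc : ∀ x1 x2 : E d, g x1 - Real.exp ε * g x2 ≤ c := by
    intro x1 x2
    have h1 := hs_term_le ε (K x1) (K x2) ⟨A, hA⟩
    have h2 : hockeyStick ε (K x1) (K x2) ≤ c := le_ciSup hc_bdd (x1, x2)
    exact le_trans h1 h2
  have hexp : ∀ (p q : ℝ) (ρ : Measure (E d)) [IsFiniteMeasure ρ],
      ∫ x, (p + q * g x) ∂ρ = p * (ρ Set.univ).toReal + q * ∫ x, g x ∂ρ := by
    intro p q ρ _
    rw [integral_add (integrable_const p) ((hint ρ).const_mul q), integral_const,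
      integral_const_mul, smul_eq_mul, measureReal_def]
    ring
  have hineq1 : ∀ x2 : E d, a ≤ c * dlt + Real.exp ε * dlt * g x2 := by
    intro x2
    have hf0 : ∀ x, 0 ≤ (c + Real.exp ε * g x2) + (-1) * g x := fun x => by
      have := hptc x x2; linarith
    have hfint : Integrable (fun x => (c + Real.exp ε * g x2) + (-1) * g x) (μ.restrict S) :=
      (integrable_const _).add ((hint _).const_mul _)
    have hmono := integral_mono_measure hle1 (ae_of_all _ hf0) hfint
    rw [Measure.restrict_smul, hsmulint (ν.restrict S) _, hexp, hexp] at hmono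
    rw [Measure.restrict_apply_univ, Measure.restrict_apply_univ, ← hMS, ← hNS,
      ← hIS, ← hJS] at hmono
    rw [ha, hdlt]
    nlinarith [hmono]
  have hineq2 : (a - c * dlt) * bta ≤ Real.exp ε * dlt * b := by
    have hf0 : ∀ x, 0 ≤ (c * dlt - a) + (Real.exp ε * dlt) * g x := fun x => by
      have := hineq1 x; linarith
    have hfint : Integrable (fun x => (c * dlt - a) + (Real.exp ε * dlt) * g x)
        ((ENNReal.ofReal (Real.exp ε) • ν).restrict Sᶜ) :=
      (integrable_const _).add ((hint _).const_mul _)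
    have hmono := integral_mono_measure hle2 (ae_of_all _ hf0) hfint
    rw [Measure.restrict_smul, hsmulint (ν.restrict Sᶜ) _, hexp, hexp] at hmono
    rw [Measure.restrict_apply_univ, Measure.restrict_apply_univ, ← hMC, ← hNC,
      ← hIC, ← hJC] at hmono
    rw [ha, hb, hbta]
    nlinarith [hmono]
  -- final assembly
  have hterm : ((μ.bind fun x => K x) A).toReal
      - Real.exp ε * ((ν.bind fun x => K x) A).toReal = a - b := by
    rw [hbind μ, hbind ν, hsplitμ, hsplitν, ha, hb]
    ring
  rw [hterm]
  rcases eq_or_lt_of_le hbta0 with hbeq | hblt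
  · have hd0 : dlt = 0 := by
      have h1 : Real.exp ε - 1 + dlt = 0 := by rw [← hbta_eq, ← hbeq]
      linarith
    have ha0 : a ≤ 0 := by
      have h := hineq1 0
      rw [hd0] at h
      simpa using h
    have hab : a - b ≤ 0 := by linarith
    exact le_trans hab (mul_nonneg hH0 hc0)
  · have h1 : Real.exp ε * dlt ≤ bta := by nlinarith
    have hkey : (a - b) * bta ≤ (c * dlt) * bta := by nlinarith [hineq2, hb0, h1]
    have hab : a - b ≤ c * dlt := le_of_mul_le_mul_right hkey hblt
    have h2 : c * dlt ≤ c * H := mul_le_mul_of_nonneg_left hdlt_le_H hc0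
    linarith [mul_comm c H ▸ h2]
end
end

section
/- Let ε ≥ 0, d ≥ 1, σ > 0, and μ_1 ≠ μ_2 ∈ ℝ^d. Then the hockey-stick divergence between the spherical Gaussians N(μ_1, σ² I_d) and N(μ_2, σ² I_d) equals E_ε( N(μ_1, σ² I_d) ‖ N(μ_2, σ² I_d) ) = Q( εσ/‖μ_1 − μ_2‖ − ‖μ_1 − μ_2‖/(2σ) ) − e^ε Q( εσ/‖μ_1 − μ_2‖ + ‖μ_1 − μ_2‖/(2σ) ). -/
open MeasureTheory Real Finset ENNReal

noncomputable section

section AuxStmt13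
open RealInnerProductSpace

lemma gauss1d_rw {v : ℝ} (hv : 0 < v) (t : ℝ) : -t^2/(2*v) = -((2*v)⁻¹) * t^2 := by
  field_simp

lemma integrable_gauss1d {v : ℝ} (hv : 0 < v) :
    Integrable fun t : ℝ => Real.exp (-t^2/(2*v)) := by
  simp_rw [gauss1d_rw hv]
  exact integrable_exp_neg_mul_sq (by positivity)

lemma integral_gauss1d {v : ℝ} (hv : 0 < v) :
    ∫ t : ℝ, Real.exp (-t^2/(2*v)) = Real.sqrt (2*Real.pi*v) := by
  simp_rw [gauss1d_rw hv]
  rw [integral_gaussian]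
  congr 1
  field_simp

lemma gaussian_inner_preimage {d : ℕ} (hd : 1 ≤ d) {v : ℝ} (hv : 0 < v) (m u : E d)
    (hu : ‖u‖ = 1) {S : Set ℝ} (hS : MeasurableSet S) :
    gaussian d m v {x | ⟪x - m, u⟫ ∈ S}
      = ENNReal.ofReal ((2 * Real.pi * v) ^ (-(1:ℝ)/2) * ∫ t in S, Real.exp (-t^2/(2*v))) := by
  have h2πv : (0:ℝ) < 2 * Real.pi * v := by positivity
  set i0 : Fin d := ⟨0, hd⟩ with hi0
  have hcont : Continuous fun x : E d => ⟪x - m, u⟫ :=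
    (continuous_id.sub continuous_const).inner continuous_const
  have hA : MeasurableSet {x : E d | ⟪x - m, u⟫ ∈ S} := hcont.measurable hS
  -- orthonormal basis with b i0 = u
  have horth : Orthonormal ℝ (({i0} : Set (Fin d)).restrict fun _ => u) := by
    constructor
    · intro i; exact hu
    · rintro ⟨i, hi⟩ ⟨j, hj⟩ hij
      simp only [Set.mem_singleton_iff] at hi hj
      exact absurd (Subtype.ext (hi.trans hj.symm)) hij
  obtain ⟨b, hb⟩ := horth.exists_orthonormalBasis_extension_of_card_eq
    (by simp [finrank_euclideanSpace_fin])
  have hbu : b i0 = u := hb i0 rfl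
  -- measure preserving map from the pi space
  set φe := (MeasurableEquiv.toLp 2 (Fin d → ℝ)).symm with hφe
  set Ψ : (Fin d → ℝ) → E d := fun w => b.repr.symm (φe.symm w) + m with hΨdef
  have hΨ : MeasurePreserving Ψ volume volume :=
    (measurePreserving_add_right volume m).comp
      (b.measurePreserving_repr_symm.comp
        (EuclideanSpace.volume_preserving_symm_measurableEquiv_toLp (Fin d)).symm)
  have hΨe : MeasurableEmbedding Ψ :=
    ((Homeomorph.addRight m).measurableEmbedding).comp
      ((b.repr.symm.toHomeomorph.measurableEmbedding).comp φe.symm.measurableEmbedding)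
  have hpre : Ψ ⁻¹' {x | ⟪x - m, u⟫ ∈ S} = {w : Fin d → ℝ | w i0 ∈ S} := by
    ext w
    simp only [Set.mem_preimage, Set.mem_setOf_eq, hΨdef]
    have : ⟪(b.repr.symm (φe.symm w) + m) - m, u⟫ = w i0 := by
      rw [add_sub_cancel_right, ← hbu, real_inner_comm, ← b.repr_apply_apply]
      simp [hφe, MeasurableEquiv.coe_toLp]
    rw [this]
  have hfun : ∀ w : Fin d → ℝ, ENNReal.ofReal (Real.exp (-‖Ψ w - m‖^2/(2*v)))
      = ENNReal.ofReal (Real.exp (-(∑ i, (w i)^2)/(2*v))) := by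
    intro w
    have hnorm : ‖Ψ w - m‖ ^ 2 = ∑ i, (w i)^2 := by
      rw [hΨdef]
      simp only [add_sub_cancel_right]
      rw [b.repr.symm.norm_map, EuclideanSpace.norm_eq, Real.sq_sqrt (by positivity)]
      refine Finset.sum_congr rfl fun i _ => ?_
      simp [hφe, MeasurableEquiv.coe_toLp, Real.norm_eq_abs, sq_abs]
    rw [hnorm]
  -- unfold gaussian, pull out constant
  have hCnn : (0:ℝ) ≤ (2*Real.pi*v) ^ (-(d:ℝ)/2) := Real.rpow_nonneg h2πv.le _
  rw [gaussian, withDensity_apply _ hA]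
  simp_rw [ENNReal.ofReal_mul hCnn]
  rw [lintegral_const_mul' _ _ ENNReal.ofReal_ne_top]
  have key := hΨ.setLIntegral_comp_preimage_emb hΨe
      (fun x => ENNReal.ofReal (Real.exp (-‖x - m‖^2/(2*v)))) {x | ⟪x - m, u⟫ ∈ S}
  rw [← key, hpre, lintegral_congr hfun]
  -- rewrite as integral of a product
  have hW : MeasurableSet {w : Fin d → ℝ | w i0 ∈ S} := (measurable_pi_apply i0) hS
  have hind : ∀ w : Fin d → ℝ,
      Set.indicator {w : Fin d → ℝ | w i0 ∈ S}
        (fun w => ENNReal.ofReal (Real.exp (-(∑ i, (w i)^2)/(2*v)))) w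
      = ENNReal.ofReal (∏ i, (if i = i0 then S.indicator
          (fun t => Real.exp (-t^2/(2*v))) else fun t => Real.exp (-t^2/(2*v))) (w i)) := by
    intro w
    by_cases hw : w i0 ∈ S
    · rw [Set.indicator_of_mem (show w ∈ {w : Fin d → ℝ | w i0 ∈ S} from hw)]
      congr 1
      rw [Finset.prod_congr rfl (fun i _ => show _ = Real.exp (-(w i)^2/(2*v)) from ?_),
        ← Real.exp_sum]
      · congr 1
        rw [← Finset.sum_div, ← Finset.sum_neg_distrib]
      · by_cases h : i = i0
        · subst h; rw [if_pos rfl, Set.indicator_of_mem hw]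
        · rw [if_neg h]
    · rw [Set.indicator_of_notMem (show w ∉ {w : Fin d → ℝ | w i0 ∈ S} from hw),
        Finset.prod_eq_zero (Finset.mem_univ i0) (by simp [Set.indicator_of_notMem hw]),
        ENNReal.ofReal_zero]
  rw [← lintegral_indicator hW, lintegral_congr hind]
  set e : ℝ → ℝ := fun t => Real.exp (-t^2/(2*v)) with he
  have hFint : ∀ i : Fin d, Integrable (if i = i0 then S.indicator e else e) := by
    intro i
    by_cases h : i = i0
    · rw [if_pos h]; exact (integrable_gauss1d hv).indicator hS
    · rw [if_neg h]; exact integrable_gauss1d hv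
  have hprod_int : Integrable (fun w : Fin d → ℝ =>
      ∏ i, (if i = i0 then S.indicator e else e) (w i)) := Integrable.fintype_prod hFint
  have hnn : 0 ≤ᵐ[(volume : Measure (Fin d → ℝ))] fun w : Fin d → ℝ =>
      ∏ i, (if i = i0 then S.indicator e else e) (w i) := by
    refine ae_of_all _ fun w => Finset.prod_nonneg fun i _ => ?_
    by_cases h : i = i0
    · rw [if_pos h]; exact Set.indicator_nonneg (fun t _ => Real.exp_nonneg _) _
    · rw [if_neg h]; exact Real.exp_nonneg _
  rw [← ofReal_integral_eq_lintegral_ofReal hprod_int hnn,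
    integral_fintype_prod_volume_eq_prod (ι := Fin d) (fun i => if i = i0 then S.indicator e else e),
    ← Finset.mul_prod_erase Finset.univ
      (fun i => ∫ t, (if i = i0 then S.indicator e else e) t) (Finset.mem_univ i0)]
  have h10 : ∫ t, (if i0 = i0 then S.indicator e else e) t = ∫ t in S, e t := by
    rw [if_pos rfl, integral_indicator hS]
  have hrest : (∏ i ∈ Finset.univ.erase i0, ∫ t, (if i = i0 then S.indicator e else e) t)
      = Real.sqrt (2*Real.pi*v) ^ (d - 1) := by
    have hco : ∀ i ∈ Finset.univ.erase i0,
        (∫ t, (if i = i0 then S.indicator e else e) t) = Real.sqrt (2*Real.pi*v) := by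
      intro i hi
      rw [if_neg (Finset.ne_of_mem_erase hi)]
      exact integral_gauss1d hv
    rw [Finset.prod_congr rfl hco, Finset.prod_const,
      Finset.card_erase_of_mem (Finset.mem_univ i0), Finset.card_univ, Fintype.card_fin]
  rw [h10, hrest, ← ENNReal.ofReal_mul (by positivity)]
  congr 1
  have h1 : Real.sqrt (2*Real.pi*v) ^ (d-1) = (2*Real.pi*v) ^ (((d:ℝ) - 1)/2) := by
    rw [Real.sqrt_eq_rpow, ← Real.rpow_natCast ((2*Real.pi*v) ^ (1/(2:ℝ))) (d-1),
      ← Real.rpow_mul h2πv.le]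
    congr 1
    rw [Nat.cast_sub hd]
    push_cast; ring
  rw [h1, show (-(1:ℝ)/2) = -(d:ℝ)/2 + ((d:ℝ)-1)/2 by ring, Real.rpow_add h2πv]
  ring

lemma gaussian_univ {d : ℕ} (hd : 1 ≤ d) {v : ℝ} (hv : 0 < v) (m : E d) :
    gaussian d m v Set.univ = 1 := by
  set u : E d := EuclideanSpace.single (⟨0, hd⟩ : Fin d) (1:ℝ) with hudef
  have hu : ‖u‖ = 1 := by rw [hudef, EuclideanSpace.norm_single]; simp
  have h := gaussian_inner_preimage hd hv m u hu MeasurableSet.univ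
  rw [show {x : E d | ⟪x - m, u⟫ ∈ Set.univ} = Set.univ by ext x; simp] at h
  rw [h, Measure.restrict_univ, integral_gauss1d hv, Real.sqrt_eq_rpow,
    ← Real.rpow_add (by positivity), show -(1:ℝ)/2 + 1/2 = 0 by ring, Real.rpow_zero,
    ENNReal.ofReal_one]

lemma gaussian_halfspace {d : ℕ} (hd : 1 ≤ d) {σ : ℝ} (hσ : 0 < σ) (m u : E d)
    (hu : ‖u‖ = 1) (r : ℝ) :
    (gaussian d m (σ^2) {x | ⟪x - m, u⟫ ∈ Set.Ici r}).toReal = gaussQ (r / σ) := by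
  have hv : (0:ℝ) < σ^2 := by positivity
  rw [gaussian_inner_preimage hd hv m u hu measurableSet_Ici,
    ENNReal.toReal_ofReal (by positivity)]
  rw [MeasureTheory.integral_Ici_eq_integral_Ioi]
  have hsub : ∫ t in Set.Ioi r, Real.exp (-t^2/(2*σ^2))
      = σ * ∫ s in Set.Ioi (r/σ), Real.exp (-s^2/2) := by
    have h := integral_comp_mul_left_Ioi (fun t => Real.exp (-t^2/(2*σ^2))) (r/σ) hσ
    rw [show σ * (r/σ) = r by field_simp] at h
    have heq : ∀ x : ℝ, Real.exp (-(σ*x)^2/(2*σ^2)) = Real.exp (-x^2/2) := by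
      intro x; congr 1; field_simp
    simp_rw [heq] at h
    rw [h, smul_eq_mul, ← mul_assoc, mul_inv_cancel₀ hσ.ne', one_mul]
  rw [hsub, gaussQ]
  have hconst : (2*Real.pi*σ^2) ^ (-(1:ℝ)/2) * σ = (Real.sqrt (2*Real.pi))⁻¹ := by
    rw [Real.mul_rpow (by positivity) (by positivity), Real.sqrt_eq_rpow]
    have h2 : ((σ:ℝ)^2) ^ (-(1:ℝ)/2) = σ⁻¹ := by
      rw [← Real.rpow_natCast σ 2, ← Real.rpow_mul hσ.le,
        show ((2:ℕ):ℝ) * (-(1:ℝ)/2) = -1 by norm_num, Real.rpow_neg_one]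
    rw [h2, show (-(1:ℝ)/2) = -(1/2 : ℝ) by norm_num, Real.rpow_neg (by positivity)]
    field_simp
  rw [← mul_assoc, hconst]


/-- Lemma 2: exact hockey-stick divergence between spherical Gaussians with common variance. -/
theorem stmt13 {d : ℕ} (hd : 1 ≤ d) (ε : ℝ) (hε : 0 ≤ ε) (σ : ℝ) (hσ : 0 < σ)
    (μ1 μ2 : E d) (hne : μ1 ≠ μ2) :
    hockeyStick ε (gaussian d μ1 (σ ^ 2)) (gaussian d μ2 (σ ^ 2))
      = gaussQ (ε * σ / ‖μ1 - μ2‖ - ‖μ1 - μ2‖ / (2 * σ))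
        - Real.exp ε * gaussQ (ε * σ / ‖μ1 - μ2‖ + ‖μ1 - μ2‖ / (2 * σ)) := by
  have hvpos : (0:ℝ) < σ^2 := by positivity
  set v : ℝ := σ^2 with hv
  set Δ : ℝ := ‖μ1 - μ2‖ with hΔdef
  have hΔ : 0 < Δ := by rw [hΔdef]; exact norm_pos_iff.mpr (sub_ne_zero.mpr hne)
  set u : E d := Δ⁻¹ • (μ1 - μ2) with hudef
  have hu : ‖u‖ = 1 := by
    rw [hudef, norm_smul, norm_inv, Real.norm_eq_abs, abs_of_pos hΔ, ← hΔdef]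
    field_simp
  set c : ℝ := (ε*v + (‖μ1‖^2 - ‖μ2‖^2)/2)/Δ with hcdef
  set A : Set (E d) := {x | c ≤ ⟪x, u⟫} with hAdef
  have hA : MeasurableSet A :=
    measurableSet_le measurable_const (continuous_id.inner continuous_const).measurable
  -- inner product computations
  have hsq : Δ^2 = ‖μ1‖^2 - 2*⟪μ1,μ2⟫ + ‖μ2‖^2 := by
    rw [hΔdef]; exact norm_sub_sq_real μ1 μ2
  have hinner1 : ⟪μ1, u⟫ = Δ⁻¹ * (‖μ1‖^2 - ⟪μ1, μ2⟫) := by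
    rw [hudef, real_inner_smul_right, inner_sub_right, real_inner_self_eq_norm_sq]
  have hinner2 : ⟪μ2, u⟫ = Δ⁻¹ * (⟪μ1, μ2⟫ - ‖μ2‖^2) := by
    rw [hudef, real_inner_smul_right, inner_sub_right, real_inner_self_eq_norm_sq,
      real_inner_comm μ2 μ1]
  have e1 : c - ⟪μ1, u⟫ = (ε*v - Δ^2/2)/Δ := by
    rw [hcdef, hinner1, hsq]
    field_simp
    ring
  have e2 : c - ⟪μ2, u⟫ = (ε*v + Δ^2/2)/Δ := by
    rw [hcdef, hinner2, hsq]
    field_simp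
    ring
  have hr1 : (c - ⟪μ1, u⟫)/σ = ε * σ / Δ - Δ / (2*σ) := by
    rw [e1, hv]
    field_simp
  have hr2 : (c - ⟪μ2, u⟫)/σ = ε * σ / Δ + Δ / (2*σ) := by
    rw [e2, hv]
    field_simp
  -- set descriptions
  have hA1 : A = {x | ⟪x - μ1, u⟫ ∈ Set.Ici (c - ⟪μ1, u⟫)} := by
    ext x
    simp only [hAdef, Set.mem_setOf_eq, inner_sub_left, Set.mem_Ici]
    constructor <;> intro h <;> linarith
  have hA2 : A = {x | ⟪x - μ2, u⟫ ∈ Set.Ici (c - ⟪μ2, u⟫)} := by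
    ext x
    simp only [hAdef, Set.mem_setOf_eq, inner_sub_left, Set.mem_Ici]
    constructor <;> intro h <;> linarith
  have hμA : ((gaussian d μ1 v) A).toReal = gaussQ (ε * σ / Δ - Δ / (2*σ)) := by
    rw [hA1, hv, gaussian_halfspace hd hσ μ1 u hu, hr1]
  have hνA : ((gaussian d μ2 v) A).toReal = gaussQ (ε * σ / Δ + Δ / (2*σ)) := by
    rw [hA2, hv, gaussian_halfspace hd hσ μ2 u hu, hr2]
  -- pointwise density comparison
  have h2v : (0:ℝ) < 2*v := by positivity
  have hkey : ∀ x : E d, x ∈ A ↔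
      Real.exp ε * Real.exp (-‖x - μ2‖^2/(2*v)) ≤ Real.exp (-‖x - μ1‖^2/(2*v)) := by
    intro x
    rw [← Real.exp_add, Real.exp_le_exp]
    have hx1 : ‖x - μ1‖^2 = ‖x‖^2 - 2*⟪x,μ1⟫ + ‖μ1‖^2 := norm_sub_sq_real x μ1
    have hx2 : ‖x - μ2‖^2 = ‖x‖^2 - 2*⟪x,μ2⟫ + ‖μ2‖^2 := norm_sub_sq_real x μ2
    have hxu : ⟪x, u⟫ = Δ⁻¹ * (⟪x,μ1⟫ - ⟪x,μ2⟫) := by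
      rw [hudef, real_inner_smul_right, inner_sub_right]
    have hmid : (c ≤ ⟪x, u⟫) ↔ 2*v*ε ≤ 2*(⟪x,μ1⟫ - ⟪x,μ2⟫) - ‖μ1‖^2 + ‖μ2‖^2 := by
      rw [hcdef, hxu, inv_mul_eq_div, div_le_div_iff₀ hΔ hΔ]
      constructor <;> intro h
      · have h' := le_of_mul_le_mul_right h hΔ
        linarith
      · have h' : ε*v + (‖μ1‖^2 - ‖μ2‖^2)/2 ≤ ⟪x,μ1⟫ - ⟪x,μ2⟫ := by linarith
        exact mul_le_mul_of_nonneg_right h' hΔ.le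
    have hmid2 : (ε + -‖x - μ2‖^2/(2*v) ≤ -‖x - μ1‖^2/(2*v)) ↔
        2*v*ε ≤ 2*(⟪x,μ1⟫ - ⟪x,μ2⟫) - ‖μ1‖^2 + ‖μ2‖^2 := by
      constructor <;> intro h
      · have h' : ε ≤ -‖x - μ1‖^2/(2*v) - -‖x - μ2‖^2/(2*v) := by linarith
        rw [div_sub_div_same, le_div_iff₀ h2v] at h'
        linarith [h', hx1, hx2]
      · have h' : ε * (2*v) ≤ -‖x - μ1‖^2 - -‖x - μ2‖^2 := by linarith [hx1, hx2]
        rw [← le_div_iff₀ h2v, ← div_sub_div_same] at h'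
        linarith
    exact hmid.trans hmid2.symm
  -- density measurability and constants
  have hCnn : (0:ℝ) ≤ (2*Real.pi*v)^(-(d:ℝ)/2) := Real.rpow_nonneg (by positivity) _
  have hmdens : ∀ mm : E d, Measurable fun x : E d =>
      ENNReal.ofReal ((2*Real.pi*v)^(-(d:ℝ)/2) * Real.exp (-‖x - mm‖^2/(2*v))) := by
    intro mm
    apply (ENNReal.continuous_ofReal.comp ?_).measurable
    exact continuous_const.mul (Real.continuous_exp.comp
      (((continuous_id.sub continuous_const).norm.pow 2).neg.div_const _))
  -- comparison of measures on subsets of A and Aᶜ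
  have hcomp1 : ∀ B : Set (E d), MeasurableSet B → B ⊆ A →
      ENNReal.ofReal (Real.exp ε) * gaussian d μ2 v B ≤ gaussian d μ1 v B := by
    intro B hB hBA
    rw [gaussian, gaussian, withDensity_apply _ hB, withDensity_apply _ hB,
      ← lintegral_const_mul' _ _ ENNReal.ofReal_ne_top]
    refine setLIntegral_mono (hmdens μ1) fun x hx => ?_
    rw [← ENNReal.ofReal_mul (Real.exp_nonneg ε)]
    apply ENNReal.ofReal_le_ofReal
    have hk := (hkey x).mp (hBA hx)
    calc Real.exp ε * ((2*Real.pi*v)^(-(d:ℝ)/2) * Real.exp (-‖x - μ2‖^2/(2*v)))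
        = (2*Real.pi*v)^(-(d:ℝ)/2) * (Real.exp ε * Real.exp (-‖x - μ2‖^2/(2*v))) := by ring
      _ ≤ (2*Real.pi*v)^(-(d:ℝ)/2) * Real.exp (-‖x - μ1‖^2/(2*v)) :=
        mul_le_mul_of_nonneg_left hk hCnn
  have hcomp2 : ∀ B : Set (E d), MeasurableSet B → B ⊆ Aᶜ →
      gaussian d μ1 v B ≤ ENNReal.ofReal (Real.exp ε) * gaussian d μ2 v B := by
    intro B hB hBA
    rw [gaussian, gaussian, withDensity_apply _ hB, withDensity_apply _ hB,
      ← lintegral_const_mul' _ _ ENNReal.ofReal_ne_top]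
    refine setLIntegral_mono ((hmdens μ2).const_mul _) fun x hx => ?_
    rw [← ENNReal.ofReal_mul (Real.exp_nonneg ε)]
    apply ENNReal.ofReal_le_ofReal
    have hk : Real.exp (-‖x - μ1‖^2/(2*v)) ≤
        Real.exp ε * Real.exp (-‖x - μ2‖^2/(2*v)) := by
      have hnot : ¬ (Real.exp ε * Real.exp (-‖x - μ2‖^2/(2*v)) ≤
          Real.exp (-‖x - μ1‖^2/(2*v))) := fun hcon => (hBA hx) ((hkey x).mpr hcon)
      exact (not_le.mp hnot).le
    calc (2*Real.pi*v)^(-(d:ℝ)/2) * Real.exp (-‖x - μ1‖^2/(2*v))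
        ≤ (2*Real.pi*v)^(-(d:ℝ)/2) * (Real.exp ε * Real.exp (-‖x - μ2‖^2/(2*v))) :=
          mul_le_mul_of_nonneg_left hk hCnn
      _ = Real.exp ε * ((2*Real.pi*v)^(-(d:ℝ)/2) * Real.exp (-‖x - μ2‖^2/(2*v))) := by ring
  -- finiteness
  have hfin : ∀ (mm : E d) (B : Set (E d)), gaussian d mm v B ≠ ⊤ := by
    intro mm B
    have h1 : gaussian d mm v B ≤ gaussian d mm v Set.univ := measure_mono (Set.subset_univ B)
    rw [gaussian_univ hd hvpos mm] at h1
    exact (h1.trans_lt ENNReal.one_lt_top).ne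
  have hofin : ∀ (mm : E d) (B : Set (E d)),
      ENNReal.ofReal (Real.exp ε) * gaussian d mm v B ≠ ⊤ :=
    fun mm B => ENNReal.mul_ne_top ENNReal.ofReal_ne_top (hfin mm B)
  -- the bound for arbitrary measurable sets
  have hbound : ∀ B : Set (E d), MeasurableSet B →
      (gaussian d μ1 v B).toReal - Real.exp ε * (gaussian d μ2 v B).toReal ≤
      (gaussian d μ1 v A).toReal - Real.exp ε * (gaussian d μ2 v A).toReal := by
    intro B hB
    have trμB : (gaussian d μ1 v B).toReal
        = (gaussian d μ1 v (B ∩ A)).toReal + (gaussian d μ1 v (B \ A)).toReal := by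
      rw [← ENNReal.toReal_add (hfin _ _) (hfin _ _), measure_inter_add_diff B hA]
    have trνB : (gaussian d μ2 v B).toReal
        = (gaussian d μ2 v (B ∩ A)).toReal + (gaussian d μ2 v (B \ A)).toReal := by
      rw [← ENNReal.toReal_add (hfin _ _) (hfin _ _), measure_inter_add_diff B hA]
    have trμA : (gaussian d μ1 v A).toReal
        = (gaussian d μ1 v (A ∩ B)).toReal + (gaussian d μ1 v (A \ B)).toReal := by
      rw [← ENNReal.toReal_add (hfin _ _) (hfin _ _), measure_inter_add_diff A hB]
    have trνA : (gaussian d μ2 v A).toReal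
        = (gaussian d μ2 v (A ∩ B)).toReal + (gaussian d μ2 v (A \ B)).toReal := by
      rw [← ENNReal.toReal_add (hfin _ _) (hfin _ _), measure_inter_add_diff A hB]
    have te1 : Real.exp ε * (gaussian d μ2 v (A \ B)).toReal
        ≤ (gaussian d μ1 v (A \ B)).toReal := by
      have h := ENNReal.toReal_mono (hfin _ _) (hcomp1 _ (hA.diff hB) Set.diff_subset)
      rwa [ENNReal.toReal_mul, ENNReal.toReal_ofReal (Real.exp_nonneg ε)] at h
    have te2 : (gaussian d μ1 v (B \ A)).toReal
        ≤ Real.exp ε * (gaussian d μ2 v (B \ A)).toReal := by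
      have h := ENNReal.toReal_mono (hofin _ _) (hcomp2 _ (hB.diff hA) fun x hx => hx.2)
      rwa [ENNReal.toReal_mul, ENNReal.toReal_ofReal (Real.exp_nonneg ε)] at h
    have hIC : B ∩ A = A ∩ B := Set.inter_comm B A
    rw [trμB, trνB, trμA, trνA, hIC]
    linarith
  -- conclude via the supremum
  haveI : Nonempty {s : Set (E d) // MeasurableSet s} := ⟨⟨∅, MeasurableSet.empty⟩⟩
  have hval : (gaussian d μ1 v A).toReal - Real.exp ε * (gaussian d μ2 v A).toReal
      = gaussQ (ε * σ / Δ - Δ / (2*σ)) - Real.exp ε * gaussQ (ε * σ / Δ + Δ / (2*σ)) := by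
    rw [hμA, hνA]
  rw [hockeyStick, ← hval]
  apply le_antisymm
  · exact ciSup_le fun B => hbound B.1 B.2
  · have hba : BddAbove (Set.range fun B : {s : Set (E d) // MeasurableSet s} =>
        (gaussian d μ1 v B.1).toReal - Real.exp ε * (gaussian d μ2 v B.1).toReal) := by
      refine ⟨(gaussian d μ1 v A).toReal - Real.exp ε * (gaussian d μ2 v A).toReal, ?_⟩
      rintro x ⟨B, rfl⟩
      exact hbound B.1 B.2
    exact le_ciSup hba ⟨A, hA⟩

end AuxStmt13
end
end

section
/- Let ε ∈ (0,1), d ≥ 1, σ > 0, and μ_1 ≠ μ_2 ∈ ℝ^d. Then the hockey-stick divergence between the spherical Gaussians satisfies E_ε( N(μ_1, σ² I_d) ‖ N(μ_2, σ² I_d) ) ≤ 1.25 · exp( − σ² ε² / (2 ‖μ_1 − μ_2‖²) ). -/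
open MeasureTheory Real Finset ENNReal

noncomputable section

lemma aux_int1d (hv : 0 < v) :
    Integrable (fun u : ℝ => Real.exp (-u ^ 2 / (2 * v))) := by
  have : ∀ u : ℝ, -u ^ 2 / (2 * v) = -((2*v)⁻¹) * u ^ 2 := by intro u; ring
  simp_rw [this]
  exact integrable_exp_neg_mul_sq (by positivity)

lemma aux_int1d_shift (hv : 0 < v) (a : ℝ) :
    Integrable (fun u : ℝ => Real.exp (-(u - a) ^ 2 / (2 * v))) := by
  have h := ((measurePreserving_add_right volume (-a)).integrable_comp_emb
    (Homeomorph.addRight (-a)).measurableEmbedding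
    (g := fun u : ℝ => Real.exp (-u ^ 2 / (2 * v))))
  have h2 := h.mpr (aux_int1d hv)
  simpa [Function.comp_def, sub_eq_add_neg] using h2

lemma aux_gauss1d (hv : 0 < v) :
    ∫ u : ℝ, Real.exp (-u ^ 2 / (2 * v)) = Real.sqrt (2 * π * v) := by
  have : ∀ u : ℝ, -u ^ 2 / (2 * v) = -((2*v)⁻¹) * u ^ 2 := by intro u; ring
  simp_rw [this, integral_gaussian]
  congr 1
  field_simp

lemma aux_gauss1d_Ioi (hv : 0 < v) :
    ∫ u in Set.Ioi (0:ℝ), Real.exp (-u ^ 2 / (2 * v)) = Real.sqrt (2 * π * v) / 2 := by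
  have : ∀ u : ℝ, -u ^ 2 / (2 * v) = -((2*v)⁻¹) * u ^ 2 := by intro u; ring
  simp_rw [this, integral_gaussian_Ioi]
  congr 2
  field_simp

lemma aux_tail_le_total (hv : 0 < v) (a : ℝ) :
    ∫ u in Set.Ioi a, Real.exp (-u ^ 2 / (2 * v)) ≤ Real.sqrt (2 * π * v) := by
  rw [← aux_gauss1d hv]
  exact setIntegral_le_integral (aux_int1d hv)
    (Filter.Eventually.of_forall fun x => (exp_pos _).le)

lemma aux_tail_nonneg (a : ℝ) :
    0 ≤ ∫ u in Set.Ioi a, Real.exp (-u ^ 2 / (2 * v)) :=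
  setIntegral_nonneg measurableSet_Ioi fun x _ => (exp_pos _).le

lemma aux_tail_pos (hv : 0 < v) {a : ℝ} (ha : 0 ≤ a) :
    ∫ u in Set.Ioi a, Real.exp (-u ^ 2 / (2 * v))
      ≤ Real.exp (-a ^ 2 / (2 * v)) * (Real.sqrt (2 * π * v) / 2) := by
  have key : ∫ u in Set.Ioi a, Real.exp (-(u - a) ^ 2 / (2 * v)) = Real.sqrt (2 * π * v) / 2 := by
    have hmp : MeasurePreserving (fun y : ℝ => y + a) volume volume :=
      measurePreserving_add_right volume a
    have hemb : MeasurableEmbedding (fun y : ℝ => y + a) :=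
      (Homeomorph.addRight a).measurableEmbedding
    have h := hmp.setIntegral_preimage_emb hemb
      (fun u : ℝ => Real.exp (-(u - a) ^ 2 / (2 * v))) (Set.Ioi a)
    have hpre : (fun y : ℝ => y + a) ⁻¹' Set.Ioi a = Set.Ioi 0 := by
      ext y; simp
    rw [hpre] at h
    rw [← h]
    simp only [add_sub_cancel_right]
    exact aux_gauss1d_Ioi hv
  calc ∫ u in Set.Ioi a, Real.exp (-u ^ 2 / (2 * v))
      ≤ ∫ u in Set.Ioi a, Real.exp (-a ^ 2 / (2 * v)) * Real.exp (-(u - a) ^ 2 / (2 * v)) := by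
        apply setIntegral_mono_on
        · exact (aux_int1d hv).integrableOn
        · exact ((aux_int1d_shift hv a).const_mul _).integrableOn
        · exact measurableSet_Ioi
        · intro u hu
          rw [← Real.exp_add, Real.exp_le_exp, ← add_div]
          have h2v : (0:ℝ) < 2 * v := by positivity
          rw [div_le_div_iff_of_pos_right h2v]
          have hua : a ≤ u := le_of_lt hu
          nlinarith
    _ = Real.exp (-a ^ 2 / (2 * v)) * (Real.sqrt (2 * π * v) / 2) := by
        rw [integral_const_mul, key]

lemma aux_tail_neg (hv : 0 < v) {a : ℝ} (ha : a < 0) :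
    ∫ u in Set.Ioi a, Real.exp (-u ^ 2 / (2 * v)) ≤ -a + Real.sqrt (2 * π * v) / 2 := by
  have hsplit : Set.Ioc a 0 ∪ Set.Ioi (0:ℝ) = Set.Ioi a := Set.Ioc_union_Ioi_eq_Ioi ha.le
  have hdisj : Disjoint (Set.Ioc a (0:ℝ)) (Set.Ioi 0) := by
    rw [Set.disjoint_left]
    rintro x hx hx'
    exact absurd hx' (not_lt.2 hx.2)
  rw [← hsplit, setIntegral_union hdisj measurableSet_Ioi
    ((aux_int1d hv).integrableOn) ((aux_int1d hv).integrableOn)]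
  rw [aux_gauss1d_Ioi hv]
  have h1 : ∫ u in Set.Ioc a 0, Real.exp (-u ^ 2 / (2 * v)) ≤ -a := by
    have h2 : ∫ u in Set.Ioc a 0, Real.exp (-u ^ 2 / (2 * v)) ≤ ∫ _u in Set.Ioc a 0, (1:ℝ) := by
      apply setIntegral_mono_on ((aux_int1d hv).integrableOn)
        (integrableOn_const measure_Ioc_lt_top.ne)
        measurableSet_Ioc
      intro u _
      rw [Real.exp_le_one_iff]
      have h2v : (0:ℝ) < 2 * v := by positivity
      exact div_nonpos_of_nonpos_of_nonneg (neg_nonpos.2 (sq_nonneg u)) h2v.le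
    apply h2.trans
    rw [setIntegral_const, Real.volume_real_Ioc_of_le ha.le, smul_eq_mul, mul_one]
    linarith
  linarith

lemma aux_norm_sq_eq_sum {d : ℕ} (x : E d) : ‖x‖ ^ 2 = ∑ i, x i ^ 2 := by
  rw [EuclideanSpace.norm_eq, Real.sq_sqrt (by positivity)]
  simp [sq_abs]

lemma aux_exp_norm_prod {d : ℕ} (hv : 0 < v) (y : Fin d → ℝ) :
    Real.exp (-‖WithLp.toLp 2 y‖ ^ 2 / (2 * v))
      = ∏ i, Real.exp (-(y i) ^ 2 / (2 * v)) := by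
  rw [aux_norm_sq_eq_sum, ← Real.exp_sum]
  congr 1
  rw [← Finset.sum_neg_distrib, Finset.sum_div]

lemma aux_int_Ed {d : ℕ} (hv : 0 < v) :
    Integrable (fun x : E d => Real.exp (-‖x‖ ^ 2 / (2 * v))) := by
  have base : Integrable (fun y : Fin d → ℝ => ∏ i, Real.exp (-(y i) ^ 2 / (2 * v))) :=
    Integrable.fintype_prod (fun _ => aux_int1d hv)
  have h := ((PiLp.volume_preserving_toLp (Fin d)).integrable_comp_emb
    (MeasurableEquiv.toLp 2 (Fin d → ℝ)).measurableEmbedding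
    (g := fun x : E d => Real.exp (-‖x‖ ^ 2 / (2 * v))))
  rw [← h]
  apply base.congr
  · exact Filter.Eventually.of_forall fun y => (aux_exp_norm_prod hv y).symm

lemma aux_int_Ed_shift {d : ℕ} (hv : 0 < v) (m : E d) :
    Integrable (fun x : E d => Real.exp (-‖x - m‖ ^ 2 / (2 * v))) := by
  have h := ((measurePreserving_add_right volume (-m)).integrable_comp_emb
    (Homeomorph.addRight (-m)).measurableEmbedding
    (g := fun x : E d => Real.exp (-‖x‖ ^ 2 / (2 * v))))
  have h2 := h.mpr (aux_int_Ed hv)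
  simpa [Function.comp_def, sub_eq_add_neg] using h2

lemma aux_sqrt_pow {d : ℕ} (hv : 0 < v) :
    Real.sqrt (2 * π * v) ^ (d : ℕ) = (2 * π * v) ^ ((d : ℝ) / 2) := by
  have h2πv : (0:ℝ) < 2 * π * v := by positivity
  rw [Real.sqrt_eq_rpow, ← Real.rpow_natCast ((2 * π * v) ^ ((1:ℝ)/2)) d,
    ← Real.rpow_mul h2πv.le]
  congr 1
  ring

lemma aux_gauss_Ed {d : ℕ} (hv : 0 < v) :
    ∫ x : E d, Real.exp (-‖x‖ ^ 2 / (2 * v)) = (2 * π * v) ^ ((d : ℝ) / 2) := by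
  have h := (PiLp.volume_preserving_toLp (Fin d)).integral_comp
    (MeasurableEquiv.toLp 2 (Fin d → ℝ)).measurableEmbedding
    (fun x : E d => Real.exp (-‖x‖ ^ 2 / (2 * v)))
  rw [← h]
  calc ∫ y : Fin d → ℝ, Real.exp (-‖WithLp.toLp 2 y‖ ^ 2 / (2 * v))
      = ∫ y : Fin d → ℝ, ∏ i, Real.exp (-(y i) ^ 2 / (2 * v)) := by
        congr 1; funext y; exact aux_exp_norm_prod hv y
    _ = ∏ _i : Fin d, ∫ u : ℝ, Real.exp (-u ^ 2 / (2 * v)) :=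
        integral_fintype_prod_eq_prod (f := fun _ u => Real.exp (-u ^ 2 / (2 * v)))
    _ = (2 * π * v) ^ ((d : ℝ) / 2) := by
        rw [Finset.prod_const, aux_gauss1d hv, Finset.card_univ, Fintype.card_fin,
          aux_sqrt_pow hv]

lemma aux_gauss_Ed_shift {d : ℕ} (hv : 0 < v) (m : E d) :
    ∫ x : E d, Real.exp (-‖x - m‖ ^ 2 / (2 * v)) = (2 * π * v) ^ ((d : ℝ) / 2) := by
  rw [← aux_gauss_Ed (d := d) hv]
  have := integral_add_right_eq_self (μ := (volume : Measure (E d)))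
    (fun x : E d => Real.exp (-‖x‖ ^ 2 / (2 * v))) (-m)
  rw [← this]
  simp [sub_eq_add_neg]

open scoped RealInnerProductSpace

lemma aux_halfspace {d : ℕ} (hd : 1 ≤ d) (hv : 0 < v) {e0 : E d} (he : ‖e0‖ = 1) (a : ℝ) :
    ∫ x in {x : E d | a < ⟪e0, x⟫}, Real.exp (-‖x‖ ^ 2 / (2 * v))
      = (∫ u in Set.Ioi a, Real.exp (-u ^ 2 / (2 * v)))
          * Real.sqrt (2 * π * v) ^ (d - 1 : ℕ) := by
  classical
  have hd0 : 0 < d := hd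
  set i0 : Fin d := ⟨0, hd0⟩ with hi0
  -- get an orthonormal basis with `b i0 = e0`
  have hcard : Module.finrank ℝ (E d) = Fintype.card (Fin d) := by
    simp [finrank_euclideanSpace_fin]
  have horth : Orthonormal ℝ (({i0} : Set (Fin d)).restrict (fun _ : Fin d => e0)) := by
    constructor
    · intro i; exact he
    · intro i j hij
      exact absurd (Subtype.ext (by
        have h1 := i.2; have h2 := j.2
        simp only [Set.mem_singleton_iff] at h1 h2
        rw [h1, h2])) hij
  obtain ⟨b, hb⟩ := horth.exists_orthonormalBasis_extension_of_card_eq hcard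
  have hb0 : b i0 = e0 := hb i0 rfl
  -- transfer to coordinates via b.repr
  have h1 := (b.measurePreserving_repr_symm).setIntegral_preimage_emb
    (show MeasurableEmbedding ⇑b.repr.symm from b.measurableEquiv.symm.measurableEmbedding)
    (fun x => Real.exp (-‖x‖ ^ 2 / (2 * v))) {x : E d | a < ⟪e0, x⟫}
  have hpre1 : ⇑b.repr.symm ⁻¹' {x : E d | a < ⟪e0, x⟫}
      = {y : EuclideanSpace ℝ (Fin d) | a < y i0} := by
    ext y
    simp only [Set.mem_preimage, Set.mem_setOf_eq]
    rw [← hb0, ← OrthonormalBasis.repr_apply_apply, LinearIsometryEquiv.apply_symm_apply]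
  rw [hpre1] at h1
  have hnorm1 : ∀ y : EuclideanSpace ℝ (Fin d),
      Real.exp (-‖b.repr.symm y‖ ^ 2 / (2 * v)) = Real.exp (-‖y‖ ^ 2 / (2 * v)) := by
    intro y; rw [LinearIsometryEquiv.norm_map]
  simp only [hnorm1] at h1
  rw [← h1]
  -- transfer to the product space
  have h2 := (PiLp.volume_preserving_toLp (Fin d)).setIntegral_preimage_emb
    (MeasurableEquiv.toLp 2 (Fin d → ℝ)).measurableEmbedding
    (fun y : EuclideanSpace ℝ (Fin d) => Real.exp (-‖y‖ ^ 2 / (2 * v)))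
    {y : EuclideanSpace ℝ (Fin d) | a < y i0}
  have hpre2 : WithLp.toLp 2 ⁻¹'
      {y : EuclideanSpace ℝ (Fin d) | a < y i0} = {z : Fin d → ℝ | a < z i0} := rfl
  rw [hpre2] at h2
  rw [← h2]
  -- compute on the product space
  have hmeas : MeasurableSet {z : Fin d → ℝ | a < z i0} :=
    measurableSet_preimage (measurable_pi_apply i0) measurableSet_Ioi
  set f1 : ℝ → ℝ := fun u => Real.exp (-u ^ 2 / (2 * v)) with hf1
  set F : Fin d → ℝ → ℝ :=
    fun i u => if i = i0 then Set.indicator (Set.Ioi a) f1 u else f1 u with hF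
  have hind : Set.indicator {z : Fin d → ℝ | a < z i0} (fun z => ∏ i, f1 (z i))
      = fun z => ∏ i, F i (z i) := by
    funext z
    by_cases hz : z ∈ {z : Fin d → ℝ | a < z i0}
    · rw [Set.indicator_of_mem hz]
      refine Finset.prod_congr rfl fun i _ => ?_
      simp only [hF]
      split_ifs with h
      · subst h; rw [Set.indicator_of_mem (show z i0 ∈ Set.Ioi a from hz)]
      · rfl
    · rw [Set.indicator_of_notMem hz]
      refine (Finset.prod_eq_zero (Finset.mem_univ i0) ?_).symm
      simp only [hF, if_true]
      exact Set.indicator_of_notMem (show z i0 ∉ Set.Ioi a from hz) _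
  calc ∫ z in {z : Fin d → ℝ | a < z i0},
        Real.exp (-‖WithLp.toLp 2 z‖ ^ 2 / (2 * v))
      = ∫ z in {z : Fin d → ℝ | a < z i0}, ∏ i, f1 (z i) := by
        apply setIntegral_congr_fun hmeas
        intro z _
        exact aux_exp_norm_prod hv z
    _ = ∫ z : Fin d → ℝ, ∏ i, F i (z i) := by
        rw [← integral_indicator hmeas, hind]
    _ = ∏ i, ∫ u : ℝ, F i u := integral_fintype_prod_eq_prod (f := F)
    _ = (∫ u in Set.Ioi a, f1 u) * Real.sqrt (2 * π * v) ^ (d - 1 : ℕ) := by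
        rw [← Finset.mul_prod_erase Finset.univ (fun i => ∫ u : ℝ, F i u)
          (Finset.mem_univ i0)]
        congr 1
        · simp only [hF, if_true]
          rw [← integral_indicator measurableSet_Ioi]
        · rw [Finset.prod_congr rfl (fun i hi => ?_), Finset.prod_const,
            Finset.card_erase_of_mem (Finset.mem_univ i0), Finset.card_univ, Fintype.card_fin]
          · simp only [hF, if_neg (Finset.ne_of_mem_erase hi)]
            exact aux_gauss1d hv

lemma aux_exp_half : Real.exp (1/2 : ℝ) ≤ 2.5 := by
  have h1 : Real.exp (1/2 : ℝ) * Real.exp (1/2 : ℝ) = Real.exp 1 := by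
    rw [← Real.exp_add]; norm_num
  have h2 := Real.exp_one_lt_d9
  nlinarith [Real.exp_pos (1/2 : ℝ)]

lemma aux_exp_02 : Real.exp (0.2 : ℝ) ≤ 1.25 := by
  have h05 : Real.exp (0.05 : ℝ) ≤ (0.95 : ℝ)⁻¹ := by
    have h := Real.add_one_le_exp (-0.05 : ℝ)
    have h95 : (0.95 : ℝ) ≤ Real.exp (-0.05 : ℝ) := by linarith
    rw [show (0.05 : ℝ) = -(-0.05) by norm_num, Real.exp_neg]
    exact inv_anti₀ (by norm_num) h95
  have h4 : Real.exp (0.2 : ℝ) = Real.exp (0.05 : ℝ) ^ (4 : ℕ) := by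
    rw [← Real.exp_nat_mul]; norm_num
  rw [h4]
  calc Real.exp (0.05 : ℝ) ^ (4:ℕ) ≤ ((0.95 : ℝ)⁻¹) ^ (4:ℕ) :=
        pow_le_pow_left₀ (Real.exp_pos _).le h05 4
    _ ≤ 1.25 := by norm_num

set_option maxHeartbeats 1000000 in
lemma aux_numeric {Δ ε : ℝ} (hv : 0 < v) (hΔ : 0 < Δ) (hε0 : 0 < ε) (hε1 : ε < 1) :
    (Real.sqrt (2 * π * v))⁻¹
        * ∫ u in Set.Ioi ((2 * v * ε - Δ ^ 2) / (2 * Δ)), Real.exp (-u ^ 2 / (2 * v))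
      ≤ 1.25 * Real.exp (-(v * ε ^ 2) / (2 * Δ ^ 2)) := by
  set s := Real.sqrt (2 * π * v) with hs'
  have hs : 0 < s := Real.sqrt_pos.2 (by positivity)
  have hs2 : s ^ 2 = 2 * π * v := Real.sq_sqrt (by positivity)
  set a := (2 * v * ε - Δ ^ 2) / (2 * Δ) with ha'
  set β := v * ε ^ 2 / (2 * Δ ^ 2) with hβ'
  have hβpos : 0 < β := by positivity
  have hgoal : -(v * ε ^ 2) / (2 * Δ ^ 2) = -β := by rw [hβ']; ring
  rw [hgoal]
  by_cases hca : 0 ≤ a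
  · have hJ := aux_tail_pos hv hca
    have key : -a ^ 2 / (2 * v) = -β + (ε / 2 - Δ ^ 2 / (8 * v)) := by
      rw [ha', hβ']
      field_simp
      ring
    have h1 : Real.exp (-a ^ 2 / (2 * v)) ≤ Real.exp (-β) * Real.exp (1/2 : ℝ) := by
      rw [key, Real.exp_add]
      apply mul_le_mul_of_nonneg_left _ (Real.exp_pos _).le
      apply Real.exp_le_exp.2
      have : 0 < Δ ^ 2 / (8 * v) := by positivity
      linarith
    calc s⁻¹ * ∫ u in Set.Ioi a, Real.exp (-u ^ 2 / (2 * v))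
        ≤ s⁻¹ * (Real.exp (-a ^ 2 / (2 * v)) * (s / 2)) := by
          apply mul_le_mul_of_nonneg_left hJ (by positivity)
      _ = Real.exp (-a ^ 2 / (2 * v)) / 2 := by
          rw [show s⁻¹ * (Real.exp (-a ^ 2 / (2 * v)) * (s / 2))
              = Real.exp (-a ^ 2 / (2 * v)) / 2 * (s⁻¹ * s) by ring,
            inv_mul_cancel₀ hs.ne', mul_one]
      _ ≤ Real.exp (-β) * Real.exp (1/2 : ℝ) / 2 := by linarith
      _ ≤ 1.25 * Real.exp (-β) := by nlinarith [Real.exp_pos (-β), aux_exp_half]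
  · push_neg at hca
    by_cases hβ2 : β ≤ 0.2
    · have h1 : s⁻¹ * ∫ u in Set.Ioi a, Real.exp (-u ^ 2 / (2 * v)) ≤ 1 := by
        calc s⁻¹ * ∫ u in Set.Ioi a, Real.exp (-u ^ 2 / (2 * v))
            ≤ s⁻¹ * s := mul_le_mul_of_nonneg_left (aux_tail_le_total hv a) (by positivity)
          _ = 1 := inv_mul_cancel₀ hs.ne'
      have h2 : Real.exp β ≤ 1.25 := (Real.exp_le_exp.2 hβ2).trans aux_exp_02
      have h4 : (1:ℝ) = Real.exp β * Real.exp (-β) := by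
        rw [← Real.exp_add]; simp
      have h5 : Real.exp β * Real.exp (-β) ≤ 1.25 * Real.exp (-β) :=
        mul_le_mul_of_nonneg_right h2 (Real.exp_pos _).le
      linarith
    · push_neg at hβ2
      -- a < 0, β > 0.2 : crude bounds
      have hva : 2 * v * ε < Δ ^ 2 := by
        by_contra hcon
        push_neg at hcon
        exact absurd (div_nonneg (by linarith) (by linarith)) (not_le.2 hca)
      have hv4 : 0.4 * Δ ^ 2 < v * ε ^ 2 := by
        have h := hβ2
        rw [hβ', lt_div_iff₀ (by positivity)] at h
        nlinarith
      have hvε : 0.4 * Δ ^ 2 < v * ε := by nlinarith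
      have hv04 : 0.4 * Δ ^ 2 < v := by nlinarith
      have hna : -a < 0.1 * Δ := by
        rw [ha', ← neg_div, div_lt_iff₀ (by linarith)]
        nlinarith
      have hsΔ : 1.58 * Δ < s := by
        have hpi := Real.pi_gt_d6
        nlinarith
      have hna2 : -a ≤ 0.07 * s := by nlinarith
      have h1 : s⁻¹ * ∫ u in Set.Ioi a, Real.exp (-u ^ 2 / (2 * v)) ≤ 0.57 := by
        calc s⁻¹ * ∫ u in Set.Ioi a, Real.exp (-u ^ 2 / (2 * v))
            ≤ s⁻¹ * (-a + s / 2) :=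
              mul_le_mul_of_nonneg_left (aux_tail_neg hv hca) (by positivity)
          _ ≤ s⁻¹ * (0.07 * s + s / 2) := by
              apply mul_le_mul_of_nonneg_left _ (by positivity)
              linarith
          _ = 0.57 := by
              rw [show s⁻¹ * (0.07 * s + s / 2) = (0.07 + 1/2) * (s⁻¹ * s) by ring,
                inv_mul_cancel₀ hs.ne']
              norm_num
      have hβ14 : β < 1/4 := by
        rw [hβ', div_lt_iff₀ (by positivity)]
        have h6 : 2 * v * ε * ε < Δ ^ 2 * ε := mul_lt_mul_of_pos_right hva hε0
        have h7 : Δ ^ 2 * ε < Δ ^ 2 := by nlinarith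
        nlinarith
      have h2 : (0.75 : ℝ) ≤ Real.exp (-β) := by
        have := Real.add_one_le_exp (-β)
        linarith
      linarith


open scoped RealInnerProductSpace in
/-- Lemma 3: Gaussian-mechanism style bound on the hockey-stick divergence between
spherical Gaussians, for `ε ∈ (0,1)`. -/
theorem stmt14 {d : ℕ} (hd : 1 ≤ d) (ε : ℝ) (hε : ε ∈ Set.Ioo (0 : ℝ) 1)
    (σ : ℝ) (hσ : 0 < σ) (μ1 μ2 : E d) (hne : μ1 ≠ μ2) :
    hockeyStick ε (gaussian d μ1 (σ ^ 2)) (gaussian d μ2 (σ ^ 2))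
      ≤ 1.25 * Real.exp (-(σ ^ 2 * ε ^ 2) / (2 * ‖μ1 - μ2‖ ^ 2)) := by
  obtain ⟨hε0, hε1⟩ := hε
  have hv : (0:ℝ) < σ ^ 2 := by positivity
  set v : ℝ := σ ^ 2 with hv'
  set Δ : ℝ := ‖μ1 - μ2‖ with hΔ'
  have hΔ : 0 < Δ := by
    rw [hΔ']
    exact norm_pos_iff.mpr (sub_ne_zero.mpr hne)
  set c : ℝ := (2 * π * v) ^ (-(d:ℝ)/2) with hc'
  have hcpos : 0 < c := Real.rpow_pos_of_pos (by positivity) _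
  set D1 : E d → ℝ := fun x => c * Real.exp (-‖x - μ1‖ ^ 2 / (2 * v)) with hD1
  set D2 : E d → ℝ := fun x => c * Real.exp (-‖x - μ2‖ ^ 2 / (2 * v)) with hD2
  have hI1 : Integrable D1 := (aux_int_Ed_shift hv μ1).const_mul c
  have hI2 : Integrable D2 := (aux_int_Ed_shift hv μ2).const_mul c
  set S : Set (E d) := {x | 2 * v * ε < ‖x - μ2‖ ^ 2 - ‖x - μ1‖ ^ 2} with hS'
  have hSm : MeasurableSet S := by
    have hcont : Continuous fun x : E d => ‖x - μ2‖ ^ 2 - ‖x - μ1‖ ^ 2 := by fun_prop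
    exact measurableSet_lt measurable_const hcont.measurable
  -- relation between gaussian measures and real set integrals
  have hgApply : ∀ (m : E d) (A : Set (E d)), MeasurableSet A →
      (gaussian d m v A).toReal = ∫ x in A, c * Real.exp (-‖x - m‖ ^ 2 / (2 * v)) := by
    intro m A hA
    have hInt : Integrable (fun x : E d => c * Real.exp (-‖x - m‖ ^ 2 / (2 * v))) :=
      (aux_int_Ed_shift hv m).const_mul c
    have hnn : 0 ≤ᵐ[volume.restrict A] fun x : E d => c * Real.exp (-‖x - m‖ ^ 2 / (2 * v)) :=
      Filter.Eventually.of_forall fun x => by positivity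
    have heq : gaussian d m v A
        = ENNReal.ofReal (∫ x in A, c * Real.exp (-‖x - m‖ ^ 2 / (2 * v))) := by
      simp only [gaussian]
      rw [withDensity_apply _ hA]
      exact (ofReal_integral_eq_lintegral_ofReal hInt.integrableOn hnn).symm
    rw [heq, ENNReal.toReal_ofReal]
    exact setIntegral_nonneg hA fun x _ => by positivity
  -- pointwise density comparison off S
  have hoff : ∀ x ∉ S, D1 x ≤ Real.exp ε * D2 x := by
    intro x hx
    simp only [hS', Set.mem_setOf_eq, not_lt] at hx
    have h2v : (0:ℝ) < 2 * v := by positivity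
    have hexp : Real.exp (-‖x - μ1‖ ^ 2 / (2 * v))
        ≤ Real.exp ε * Real.exp (-‖x - μ2‖ ^ 2 / (2 * v)) := by
      rw [← Real.exp_add, Real.exp_le_exp]
      have hq : (‖x - μ2‖ ^ 2 - ‖x - μ1‖ ^ 2) / (2 * v) ≤ ε :=
        (div_le_iff₀ h2v).2 (by linarith)
      have hsplit2 : -‖x - μ1‖ ^ 2 / (2 * v)
          = (‖x - μ2‖ ^ 2 - ‖x - μ1‖ ^ 2) / (2 * v) + -‖x - μ2‖ ^ 2 / (2 * v) := by
        ring
      linarith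
    calc D1 x = c * Real.exp (-‖x - μ1‖ ^ 2 / (2 * v)) := rfl
      _ ≤ c * (Real.exp ε * Real.exp (-‖x - μ2‖ ^ 2 / (2 * v))) :=
          mul_le_mul_of_nonneg_left hexp hcpos.le
      _ = Real.exp ε * D2 x := by rw [hD2]; ring
  -- every test set is dominated by S
  have hkey : ∀ (A : Set (E d)), MeasurableSet A →
      (gaussian d μ1 v A).toReal - Real.exp ε * (gaussian d μ2 v A).toReal
        ≤ ∫ x in S, D1 x := by
    intro A hA
    have hg1 : (gaussian d μ1 v A).toReal = ∫ x in A, D1 x := hgApply μ1 A hA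
    have hg2 : (gaussian d μ2 v A).toReal = ∫ x in A, D2 x := hgApply μ2 A hA
    rw [hg1, hg2]
    have hnn1 : 0 ≤ᵐ[volume.restrict S] D1 := Filter.Eventually.of_forall fun x => by
      rw [hD1]; positivity
    have hnn1' : 0 ≤ᵐ[volume.restrict A] D2 := Filter.Eventually.of_forall fun x => by
      rw [hD2]; positivity
    have hsplit := integral_inter_add_diff (s := A) (t := S) (f := D1)
      (μ := (volume : Measure (E d))) hSm hI1.integrableOn
    have h1 : ∫ x in A ∩ S, D1 x ≤ ∫ x in S, D1 x :=
      setIntegral_mono_set hI1.integrableOn hnn1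
        (HasSubset.Subset.eventuallyLE Set.inter_subset_right)
    have h2 : ∫ x in A \ S, D1 x ≤ ∫ x in A \ S, Real.exp ε * D2 x :=
      setIntegral_mono_on hI1.integrableOn ((hI2.const_mul _).integrableOn)
        (hA.diff hSm) (fun x hx => hoff x hx.2)
    have h3 : ∫ x in A \ S, Real.exp ε * D2 x = Real.exp ε * ∫ x in A \ S, D2 x :=
      integral_const_mul _ _
    have h4 : ∫ x in A \ S, D2 x ≤ ∫ x in A, D2 x :=
      setIntegral_mono_set hI2.integrableOn hnn1'
        (HasSubset.Subset.eventuallyLE Set.diff_subset)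
    have h5 : Real.exp ε * ∫ x in A \ S, D2 x ≤ Real.exp ε * ∫ x in A, D2 x :=
      mul_le_mul_of_nonneg_left h4 (Real.exp_pos _).le
    linarith
  -- the sup is dominated
  have hsup : hockeyStick ε (gaussian d μ1 v) (gaussian d μ2 v) ≤ ∫ x in S, D1 x := by
    simp only [hockeyStick]
    haveI : Nonempty {s : Set (E d) // MeasurableSet s} := ⟨⟨∅, MeasurableSet.empty⟩⟩
    exact ciSup_le fun A => hkey A.1 A.2
  -- compute the integral over S
  set aval : ℝ := (2 * v * ε - Δ ^ 2) / (2 * Δ) with haval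
  set e0 : E d := Δ⁻¹ • (μ1 - μ2) with he0'
  have he0 : ‖e0‖ = 1 := by
    rw [he0', norm_smul, norm_inv, Real.norm_eq_abs, abs_of_pos hΔ, ← hΔ']
    exact inv_mul_cancel₀ hΔ.ne'
  have htrans : ∫ x in S, Real.exp (-‖x - μ1‖ ^ 2 / (2 * v))
      = ∫ y in {y : E d | aval < ⟪e0, y⟫}, Real.exp (-‖y‖ ^ 2 / (2 * v)) := by
    have hmp : MeasurePreserving (fun y : E d => y + μ1) volume volume :=
      measurePreserving_add_right volume μ1
    have hemb : MeasurableEmbedding (fun y : E d => y + μ1) :=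
      (Homeomorph.addRight μ1).measurableEmbedding
    have h := hmp.setIntegral_preimage_emb hemb
      (fun x => Real.exp (-‖x - μ1‖ ^ 2 / (2 * v))) S
    rw [← h]
    have hpre : (fun y : E d => y + μ1) ⁻¹' S = {y : E d | aval < ⟪e0, y⟫} := by
      ext y
      simp only [Set.mem_preimage, hS', Set.mem_setOf_eq]
      have hy2 : y + μ1 - μ2 = y + (μ1 - μ2) := by abel
      have hy1 : y + μ1 - μ1 = y := add_sub_cancel_right y μ1
      rw [hy2, hy1, norm_add_sq_real]
      have hie : ⟪e0, y⟫ = ⟪μ1 - μ2, y⟫ / Δ := by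
        rw [he0', real_inner_smul_left, div_eq_inv_mul]
      rw [hie, haval, div_lt_div_iff₀ (by linarith) hΔ]
      have hyc : ⟪y, μ1 - μ2⟫ = ⟪μ1 - μ2, y⟫ := real_inner_comm _ _
      rw [hyc, ← hΔ']
      constructor <;> intro hh <;> nlinarith
    rw [hpre]
    simp only [add_sub_cancel_right]
  have hhalf := aux_halfspace hd hv he0 aval
  have hSD1 : ∫ x in S, D1 x = (Real.sqrt (2 * π * v))⁻¹
      * ∫ u in Set.Ioi aval, Real.exp (-u ^ 2 / (2 * v)) := by
    simp only [hD1]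
    rw [integral_const_mul, htrans, hhalf]
    have hpow : Real.sqrt (2 * π * v) ^ (d - 1 : ℕ) = (2 * π * v) ^ (((d:ℝ) - 1) / 2) := by
      rw [aux_sqrt_pow (d := d - 1) hv]
      congr 1
      rw [Nat.cast_sub hd, Nat.cast_one]
    have hc2 : c * (2 * π * v) ^ (((d:ℝ) - 1) / 2) = (Real.sqrt (2 * π * v))⁻¹ := by
      rw [hc', ← Real.rpow_add (by positivity)]
      rw [show -(d:ℝ)/2 + ((d:ℝ) - 1)/2 = -(1/2) by ring]
      rw [Real.rpow_neg (by positivity), Real.sqrt_eq_rpow]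
    rw [hpow, show c * ((∫ u in Set.Ioi aval, Real.exp (-u ^ 2 / (2 * v)))
          * (2 * π * v) ^ (((d:ℝ) - 1) / 2))
        = (c * (2 * π * v) ^ (((d:ℝ) - 1) / 2))
          * ∫ u in Set.Ioi aval, Real.exp (-u ^ 2 / (2 * v)) by ring, hc2]
  have hnum := aux_numeric (Δ := Δ) (ε := ε) hv hΔ hε0 hε1
  rw [hSD1] at hsup
  exact hsup.trans hnum
end
end
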